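/- arXiv:math/0606687 — 3 statements merged into one kernel-verified Lean document; each statement's English description precedes it below -/
import Mathlib

section
/- Let T be a triangulation of a surface S and let C be the embedding of a nonseparating one-sided 3-cycle of T. Cutting T along C produces a surface with a single boundary hexagon u′1u′2u′3v′1v′2v′3; capping this hexagon with a new vertex t′ joined to all six boundary vertices (six new triangular faces) yields a triangulation T′ of a closed surface S′ with eg(T′) = eg(T) − 1. -/
open Finset

open scoped Classical

/-! Combinatorial model of triangulations of closed surfaces.
A triangulation is encoded by its finite set of triangular faces (3-element
vertex sets).  Surface-ness is expressed by: every edge lies in exactly two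
faces, the link of every vertex is connected (hence a single cycle), and the
whole complex is connected. -/

variable {V : Type*} {W : Type*}

/-- Two faces are adjacent when they share an edge. -/
def FaceAdj [DecidableEq V] (faces : Finset (Finset V)) (A B : Finset V) : Prop :=
  A ∈ faces ∧ B ∈ faces ∧ (A ∩ B).card = 2

/-- Two faces at a vertex `v` are adjacent when they share an edge through `v`. -/
def LinkAdj [DecidableEq V] (faces : Finset (Finset V)) (v : V) (A B : Finset V) : Prop :=
  A ∈ faces ∧ B ∈ faces ∧ v ∈ A ∩ B ∧ (A ∩ B).card = 2

/-- `faces` is the set of faces of a triangulation of a closed surface. -/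
structure IsTriangulation [DecidableEq V] (faces : Finset (Finset V)) : Prop where
  nonempty : faces.Nonempty
  card_three : ∀ F ∈ faces, F.card = 3
  edge_two_faces : ∀ e : Finset V, e.card = 2 → (∃ F ∈ faces, e ⊆ F) →
    (faces.filter fun F => e ⊆ F).card = 2
  link_connected : ∀ v : V, ∀ F ∈ faces, ∀ G ∈ faces, v ∈ F → v ∈ G →
    Relation.ReflTransGen (LinkAdj faces v) F G
  connected : ∀ F ∈ faces, ∀ G ∈ faces, Relation.ReflTransGen (FaceAdj faces) F G

/-- The vertices of a triangulation. -/
def vertexSet [DecidableEq V] (faces : Finset (Finset V)) : Finset V :=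
  faces.biUnion id

/-- The edges of a triangulation: the 2-element subsets of faces. -/
noncomputable def edgeSet [DecidableEq V] (faces : Finset (Finset V)) : Finset (Finset V) :=
  ((vertexSet faces).powersetCard 2).filter fun e => ∃ F ∈ faces, e ⊆ F

/-- Euler characteristic `n - e + f`. -/
noncomputable def eulerChar [DecidableEq V] (faces : Finset (Finset V)) : ℤ :=
  ((vertexSet faces).card : ℤ) - ((edgeSet faces).card : ℤ) + (faces.card : ℤ)

/-- Euler genus `2 - χ`. -/
noncomputable def eulerGenus [DecidableEq V] (faces : Finset (Finset V)) : ℤ :=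
  2 - eulerChar faces

/-- The degree of a vertex. -/
noncomputable def degree [DecidableEq V] (faces : Finset (Finset V)) (v : V) : ℕ :=
  ((edgeSet faces).filter fun e => v ∈ e).card

/-- Adjacency of vertices in a triangulation. -/
def Adj [DecidableEq V] (faces : Finset (Finset V)) (a b : V) : Prop :=
  a ≠ b ∧ ∃ F ∈ faces, ({a, b} : Finset V) ⊆ F

/-- A 3-cycle of the graph of the triangulation: three pairwise adjacent vertices. -/
noncomputable def IsTriCycle [DecidableEq V] (faces : Finset (Finset V)) (C : Finset V) : Prop :=
  C.card = 3 ∧ ∀ e ∈ C.powersetCard 2, e ∈ edgeSet faces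

/-- A nonfacial 3-cycle: a 3-cycle which does not bound a face. -/
noncomputable def IsNonfacialTriCycle [DecidableEq V] (faces : Finset (Finset V))
    (C : Finset V) : Prop :=
  IsTriCycle faces C ∧ C ∉ faces

/-- The number of 3-cycles containing a given edge (= common neighbours of its ends). -/
noncomputable def numTriCyclesOn [DecidableEq V] (faces : Finset (Finset V))
    (e : Finset V) : ℕ :=
  ((vertexSet faces).filter fun x => x ∉ e ∧ ∀ y ∈ e, Adj faces x y).card

/-- Contraction of the edge `ac` (the vertex `c` is identified with `a`,
the two faces containing `ac` collapse, multiple edges/faces merge). -/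
def contract [DecidableEq V] (faces : Finset (Finset V)) (a c : V) : Finset (Finset V) :=
  (faces.filter fun F => ¬ (a ∈ F ∧ c ∈ F)).image
    (Finset.image fun x => if x = c then a else x)

/-- A coherent cyclic orientation of one triangular face, given as the set of its three
directed edges. -/
def IsCyclicOrientation [DecidableEq V] (F : Finset V) (d : Finset (V × V)) : Prop :=
  d.card = 3 ∧ (∀ p ∈ d, p.1 ∈ F ∧ p.2 ∈ F ∧ p.1 ≠ p.2) ∧
  (∀ x ∈ F, (d.filter fun p => p.1 = x).card = 1 ∧ (d.filter fun p => p.2 = x).card = 1)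

/-- Orientability: the faces can be coherently oriented (each directed edge is used
by at most one oriented face). -/
def Orientable [DecidableEq V] (faces : Finset (Finset V)) : Prop :=
  ∃ or : Finset V → Finset (V × V),
    (∀ F ∈ faces, IsCyclicOrientation F (or F)) ∧
    (∀ F ∈ faces, ∀ G ∈ faces, F ≠ G → ∀ p ∈ or F, p ∉ or G)

/-- Two (connected, closed) triangulated surfaces are the same surface iff they have the
same Euler characteristic and the same orientability. -/
noncomputable def SameSurface [DecidableEq V] (f₁ f₂ : Finset (Finset V)) : Prop :=
  eulerChar f₁ = eulerChar f₂ ∧ (Orientable f₁ ↔ Orientable f₂)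

/-- The edge `ac` is contractible: contracting it yields again a triangulation
of the same surface. -/
noncomputable def Contractible [DecidableEq V] (faces : Finset (Finset V)) (a c : V) : Prop :=
  ({a, c} : Finset V) ∈ edgeSet faces ∧ IsTriangulation (contract faces a c) ∧
    SameSurface (contract faces a c) faces

/-- An edge (as a 2-element set) is contractible. -/
noncomputable def ContractibleEdge [DecidableEq V] (faces : Finset (Finset V))
    (e : Finset V) : Prop :=
  ∃ a c : V, e = ({a, c} : Finset V) ∧ Contractible faces a c

/-- An irreducible triangulation: no edge is contractible. -/
noncomputable def IrreducibleTri [DecidableEq V] (faces : Finset (Finset V)) : Prop :=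
  IsTriangulation faces ∧ ∀ e ∈ edgeSet faces, ¬ ContractibleEdge faces e

/-- Face adjacency avoiding the edges of the cycle with vertex set `C`. -/
def SeparatesRel [DecidableEq V] (faces : Finset (Finset V)) (C : Finset V)
    (A B : Finset V) : Prop :=
  A ∈ faces ∧ B ∈ faces ∧ (A ∩ B).card = 2 ∧ ¬ (A ∩ B ⊆ C)

/-- A cycle with vertex set `C` is nonseparating iff the complement of the embedded
curve is connected, i.e. any two faces are joined by a path of faces never crossing
an edge of the cycle. -/
def Nonseparating [DecidableEq V] (faces : Finset (Finset V)) (C : Finset V) : Prop :=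
  ∀ A ∈ faces, ∀ B ∈ faces, Relation.ReflTransGen (SeparatesRel faces C) A B

/-- A corner of the cycle `C`: a vertex of `C` together with a face containing it. -/
def Corner [DecidableEq V] (faces : Finset (Finset V)) (C : Finset V)
    (p : V × Finset V) : Prop :=
  p.1 ∈ C ∧ p.2 ∈ faces ∧ p.1 ∈ p.2

/-- Adjacency of corners of `C`: move inside a link avoiding the cycle, or move along
a face containing an edge of the cycle.  The connected components of this relation
are the boundary curves of a regular neighbourhood of the cycle. -/
def CornerRel [DecidableEq V] (faces : Finset (Finset V)) (C : Finset V)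
    (p q : V × Finset V) : Prop :=
  Corner faces C p ∧ Corner faces C q ∧
    ((p.1 = q.1 ∧ (p.2 ∩ q.2).card = 2 ∧ p.1 ∈ p.2 ∩ q.2 ∧ ¬ (p.2 ∩ q.2 ⊆ C)) ∨
     (p.2 = q.2 ∧ p.1 ≠ q.1))

/-- A cycle is one-sided iff a regular neighbourhood of it is a Möbius band, i.e. the
neighbourhood has a single boundary curve: all corners are connected. -/
def OneSided [DecidableEq V] (faces : Finset (Finset V)) (C : Finset V) : Prop :=
  ∀ p q, Corner faces C p → Corner faces C q →
    Relation.ReflTransGen (CornerRel faces C) p q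

/-- `ℓ` enumerates the link of `a` cyclically: the faces at `a` are exactly the
triangles `a ℓᵢ ℓᵢ₊₁`. -/
def IsLink [DecidableEq V] (faces : Finset (Finset V)) (a : V) (d : ℕ)
    (ℓ : ZMod d → V) : Prop :=
  Function.Injective ℓ ∧ (∀ i, ℓ i ≠ a) ∧
    ∀ F : Finset V, (F ∈ faces ∧ a ∈ F) ↔ ∃ i : ZMod d, F = {a, ℓ i, ℓ (i + 1)}

/-- Splitting the vertex `a` along `ℓ₀ a ℓₛ₋₁` (paper's `v₁ a vₛ`): the vertex `a`
becomes the two vertices `a₁ = Sum.inl a` and `a₂ = Sum.inr ()`. -/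
noncomputable def splitFaces [DecidableEq V] (faces : Finset (Finset V)) (a : V) {d : ℕ}
    (ℓ : ZMod d → V) (s : ℕ) : Finset (Finset (V ⊕ Unit)) :=
  ((faces.filter fun F => a ∉ F).image (Finset.image Sum.inl)) ∪
  ((Finset.range (s - 1)).image fun i =>
    ({Sum.inl a, Sum.inl (ℓ (i : ZMod d)), Sum.inl (ℓ ((i : ZMod d) + 1))} :
      Finset (V ⊕ Unit))) ∪
  ((Finset.Ico (s - 1) d).image fun i =>
    ({Sum.inr (), Sum.inl (ℓ (i : ZMod d)), Sum.inl (ℓ ((i : ZMod d) + 1))} :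
      Finset (V ⊕ Unit))) ∪
  {({Sum.inl a, Sum.inr (), Sum.inl (ℓ (0 : ZMod d))} : Finset (V ⊕ Unit)),
   ({Sum.inl a, Sum.inr (), Sum.inl (ℓ ((s - 1 : ℕ) : ZMod d))} : Finset (V ⊕ Unit))}

/-- Renaming of vertices when cutting along a two-sided 3-cycle `w₀w₁w₂`:
faces with `side = true` keep the original vertices, faces with `side = false`
get the new copies `Sum.inr i`. -/
noncomputable def renameTwoSided [DecidableEq V] (w : Fin 3 → V) (s : Bool) (x : V) : V ⊕ Fin 3 :=
  if x = w 0 then (if s then Sum.inl x else Sum.inr 0)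
  else if x = w 1 then (if s then Sum.inl x else Sum.inr 1)
  else if x = w 2 then (if s then Sum.inl x else Sum.inr 2)
  else Sum.inl x

/-- A coherent side assignment for cutting along the two-sided 3-cycle with vertex
set `C`: constant along link arcs avoiding the cycle, and the two faces on an edge
of the cycle lie on opposite sides. -/
def CoherentSide [DecidableEq V] (faces : Finset (Finset V)) (C : Finset V)
    (side : Finset V → Bool) : Prop :=
  (∀ F ∈ faces, ∀ G ∈ faces, (F ∩ G).card = 2 → ((F ∩ G) ∩ C).Nonempty →
      ¬ (F ∩ G ⊆ C) → side F = side G) ∧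
  (∀ F ∈ faces, ∀ G ∈ faces, F ≠ G → (F ∩ G).card = 2 → F ∩ G ⊆ C → side F ≠ side G)

/-- Cut along a two-sided 3-cycle and cap the two resulting boundary 3-cycles
with two new triangular faces. -/
noncomputable def cutCapTwoSided [DecidableEq V] (faces : Finset (Finset V)) (w : Fin 3 → V)
    (side : Finset V → Bool) : Finset (Finset (V ⊕ Fin 3)) :=
  (faces.image fun F => F.image (renameTwoSided w (side F))) ∪
  {({Sum.inl (w 0), Sum.inl (w 1), Sum.inl (w 2)} : Finset (V ⊕ Fin 3)),
   ({Sum.inr 0, Sum.inr 1, Sum.inr 2} : Finset (V ⊕ Fin 3))}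

/-- The six edges of the boundary hexagon `u₁u₂u₃v₁v₂v₃` produced by cutting along a
one-sided 3-cycle; `(i, true)` is `uᵢ₊₁` and `(i, false)` is `vᵢ₊₁`. -/
def hexEdges : Finset (Finset (Fin 3 × Bool)) :=
  { ({(0, true), (1, true)} : Finset (Fin 3 × Bool)),
    ({(1, true), (2, true)} : Finset (Fin 3 × Bool)),
    ({(2, true), (0, false)} : Finset (Fin 3 × Bool)),
    ({(0, false), (1, false)} : Finset (Fin 3 × Bool)),
    ({(1, false), (2, false)} : Finset (Fin 3 × Bool)),
    ({(2, false), (0, true)} : Finset (Fin 3 × Bool)) }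

/-- Renaming of vertices when cutting along a one-sided 3-cycle: the vertex `w i` of a
face becomes the copy `(i, σ i)` on the boundary hexagon. -/
noncomputable def renameOneSided [DecidableEq V] (w : Fin 3 → V) (σ : Fin 3 → Bool) (x : V) :
    V ⊕ (Fin 3 × Bool) ⊕ Unit :=
  if x = w 0 then Sum.inr (Sum.inl (0, σ 0))
  else if x = w 1 then Sum.inr (Sum.inl (1, σ 1))
  else if x = w 2 then Sum.inr (Sum.inl (2, σ 2))
  else Sum.inl x

/-- Coherence of the corner assignment `σ` for cutting along a one-sided 3-cycle
`w₀w₁w₂`: constant along link arcs avoiding the cycle, each face on an edge of the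
cycle produces an edge of the boundary hexagon, and each hexagon edge is produced by
exactly one face. -/
noncomputable def CoherentOneSided [DecidableEq V] (faces : Finset (Finset V)) (w : Fin 3 → V)
    (σ : Finset V → Fin 3 → Bool) : Prop :=
  (∀ F ∈ faces, ∀ G ∈ faces, ∀ i : Fin 3, (F ∩ G).card = 2 → w i ∈ F ∩ G →
      ¬ (F ∩ G ⊆ ({w 0, w 1, w 2} : Finset V)) → σ F i = σ G i) ∧
  (∀ F ∈ faces, ∀ i j : Fin 3, i ≠ j → ({w i, w j} : Finset V) ⊆ F →
      ({(i, σ F i), (j, σ F j)} : Finset (Fin 3 × Bool)) ∈ hexEdges) ∧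
  (∀ h ∈ hexEdges,
    (faces.filter fun F => ∃ i j : Fin 3, i ≠ j ∧ ({w i, w j} : Finset V) ⊆ F ∧
      ({(i, σ F i), (j, σ F j)} : Finset (Fin 3 × Bool)) = h).card = 1)

/-- Cut along a one-sided 3-cycle and cap the resulting boundary hexagon with a new
vertex `t' = Sum.inr (Sum.inr ())` joined to the six boundary vertices. -/
noncomputable def cutCapOneSided [DecidableEq V] (faces : Finset (Finset V)) (w : Fin 3 → V)
    (σ : Finset V → Fin 3 → Bool) : Finset (Finset (V ⊕ (Fin 3 × Bool) ⊕ Unit)) :=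
  (faces.image fun F => F.image (renameOneSided w (σ F))) ∪
  (hexEdges.image fun h =>
    insert (Sum.inr (Sum.inr ()))
      (h.image fun p => (Sum.inr (Sum.inl p) : V ⊕ (Fin 3 × Bool) ⊕ Unit)))

/-- Adding a handle: remove the faces `abc` and `def` and identify `d ↦ a`, `e ↦ b`,
`f ↦ c`. -/
noncomputable def glueHandle [DecidableEq V] (faces : Finset (Finset V)) (a b c d e f : V) :
    Finset (Finset V) :=
  ((faces \ {({a, b, c} : Finset V), ({d, e, f} : Finset V)}).image
    (Finset.image fun x => if x = d then a else if x = e then b else if x = f then c else x))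

/-- Adding a crosscap at a degree six vertex `t` with link `ℓ₀ … ℓ₅`: remove `t` with
its incident edges and faces and identify opposite vertices of the hexagonal hole. -/
noncomputable def addCrosscap [DecidableEq V] (faces : Finset (Finset V)) (t : V) (ℓ : ZMod 6 → V) :
    Finset (Finset V) :=
  (faces.filter fun F => t ∉ F).image
    (Finset.image fun x =>
      if x = ℓ 3 then ℓ 0 else if x = ℓ 4 then ℓ 1 else if x = ℓ 5 then ℓ 2 else x)

/-- Connected sum of two triangulations along the faces `abc` and `def`. -/
noncomputable def glueSum [DecidableEq V] [DecidableEq W] (f₁ : Finset (Finset V))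
    (f₂ : Finset (Finset W)) (a b c : V) (d e f : W) : Finset (Finset (V ⊕ W)) :=
  ((f₁.erase {a, b, c}).image (Finset.image Sum.inl)) ∪
  ((f₂.erase {d, e, f}).image (Finset.image fun y =>
    if y = d then Sum.inl a else if y = e then Sum.inl b
    else if y = f then Sum.inl c else (Sum.inr y : V ⊕ W)))

/-! Cutting along the cycle `w₀w₁w₂` gives each face `F` the copies `(i, σ F i)` of the cycle
vertices it contains.  Coherence of `σ` means that two faces sharing an edge off the cycle
still share its lift, while the faces along the three cycle edges contribute, one each, the
six sides of the hexagon `hexEdges`.  Once the hexagon is capped by the apex, every edge again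
lies in two faces and every link is again a single cycle, and the complex stays connected
because the cycle is nonseparating.  The cut adds 3 vertices and the cap 1, the cap adds
6 faces, and `2E = 3F` then forces 9 new edges, so `χ` grows by 4 − 9 + 6 = 1. -/

section Triangulation

variable {α : Type*} [DecidableEq α] {faces : Finset (Finset α)}

instance : Std.Symm (FaceAdj faces) :=
  ⟨fun _ _ ⟨hA, hB, hAB⟩ => ⟨hB, hA, by rwa [Finset.inter_comm]⟩⟩

instance (v : α) : Std.Symm (LinkAdj faces v) :=
  ⟨fun _ _ ⟨hA, hB, hv, hAB⟩ =>
    ⟨hB, hA, by rwa [Finset.inter_comm], by rwa [Finset.inter_comm]⟩⟩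

theorem mem_edgeSet {e : Finset α} :
    e ∈ edgeSet faces ↔ e.card = 2 ∧ ∃ F ∈ faces, e ⊆ F := by
  simp only [edgeSet, Finset.mem_filter, Finset.mem_powersetCard]
  constructor
  · rintro ⟨⟨-, he⟩, hF⟩
    exact ⟨he, hF⟩
  · rintro ⟨he, F, hF, heF⟩
    exact ⟨⟨heF.trans fun x hx => Finset.mem_biUnion.2 ⟨F, hF, hx⟩, he⟩, F, hF, heF⟩

theorem two_mul_card_edgeSet (h3 : ∀ F ∈ faces, F.card = 3)
    (h2 : ∀ e : Finset α, e.card = 2 → (∃ F ∈ faces, e ⊆ F) →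
      (faces.filter fun F => e ⊆ F).card = 2) :
    2 * (edgeSet faces).card = 3 * faces.card := by
  have hedges : ∀ F ∈ faces, (edgeSet faces).filter (fun e => e ⊆ F) = F.powersetCard 2 := by
    intro F hF
    ext e
    simp only [Finset.mem_filter, mem_edgeSet, Finset.mem_powersetCard]
    exact ⟨fun ⟨⟨he, _⟩, heF⟩ => ⟨heF, he⟩, fun ⟨heF, he⟩ => ⟨⟨he, F, hF, heF⟩, heF⟩⟩
  calc 2 * (edgeSet faces).card
      = ∑ e ∈ edgeSet faces, (faces.filter fun F => e ⊆ F).card := by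
        rw [Finset.sum_congr rfl fun e he => h2 e (mem_edgeSet.1 he).1 (mem_edgeSet.1 he).2]
        simp [mul_comm]
    _ = ∑ F ∈ faces, ((edgeSet faces).filter fun e => e ⊆ F).card := by
        simp only [Finset.card_filter]
        exact Finset.sum_comm
    _ = 3 * faces.card := by
        rw [Finset.sum_congr rfl fun F hF => by
          rw [hedges F hF, Finset.card_powersetCard, h3 F hF]]
        simp [mul_comm]

theorem card_inter_eq_two {F G : Finset α} (hF : F.card = 3) (hG : G.card = 3) (hFG : F ≠ G)
    {x y : α} (hxy : x ≠ y) (hx : x ∈ F ∩ G) (hy : y ∈ F ∩ G) : (F ∩ G).card = 2 := by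
  have hle : (F ∩ G).card ≤ 3 := hF ▸ Finset.card_le_card Finset.inter_subset_left
  have hge : 2 ≤ (F ∩ G).card := by
    rw [← Finset.card_pair hxy]
    exact Finset.card_le_card (Finset.insert_subset hx (Finset.singleton_subset_iff.2 hy))
  have hne : (F ∩ G).card ≠ 3 := fun h3 => hFG <|
    (Finset.eq_of_subset_of_card_le Finset.inter_subset_left (by omega)).symm.trans
      (Finset.eq_of_subset_of_card_le Finset.inter_subset_right (by omega))
  omega

theorem IsTriCycle.exists_face {C : Finset α} (hC : IsTriCycle faces C) {x y : α}
    (hx : x ∈ C) (hy : y ∈ C) (hxy : x ≠ y) : ∃ F ∈ faces, x ∈ F ∧ y ∈ F := by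
  have hpair : ({x, y} : Finset α) ∈ C.powersetCard 2 :=
    Finset.mem_powersetCard.2 ⟨Finset.insert_subset hx (Finset.singleton_subset_iff.2 hy),
      Finset.card_pair hxy⟩
  obtain ⟨-, F, hF, hsub⟩ := mem_edgeSet.1 (hC.2 _ hpair)
  exact ⟨F, hF, hsub (by simp), hsub (by simp)⟩

theorem IsTriCycle.subset_vertexSet {C : Finset α} (hC : IsTriCycle faces C) :
    C ⊆ vertexSet faces := by
  intro x hx
  obtain ⟨y, hy, hyx⟩ := Finset.exists_mem_ne (by rw [hC.1]; norm_num) x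
  obtain ⟨F, hF, hxF, -⟩ := hC.exists_face hx hy hyx.symm
  exact Finset.mem_biUnion.2 ⟨F, hF, hxF⟩

end Triangulation

theorem card_of_mem_hexEdges : ∀ h ∈ hexEdges, h.card = 2 := by decide

theorem exists_eq_pair_of_mem_hexEdges :
    ∀ h ∈ hexEdges, ∃ p q : Fin 3 × Bool, p.1 ≠ q.1 ∧ h = {p, q} := by decide

theorem exists_mem_hexEdges_mem : ∀ p : Fin 3 × Bool, ∃ h ∈ hexEdges, p ∈ h := by decide

theorem card_hexEdges : hexEdges.card = 6 := by decide

theorem card_filter_mem_hexEdges :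
    ∀ p : Fin 3 × Bool, (hexEdges.filter fun h => p ∈ h).card = 2 := by decide

theorem filter_superset_hexEdges :
    ∀ h ∈ hexEdges, (hexEdges.filter fun h' => h ⊆ h') = {h} := by decide

theorem card_inter_le_one_of_mem_hexEdges :
    ∀ h₁ ∈ hexEdges, ∀ h₂ ∈ hexEdges, h₁ ≠ h₂ → (h₁ ∩ h₂).card ≤ 1 := by decide

def HexAdj (h₁ h₂ : Finset (Fin 3 × Bool)) : Prop :=
  h₁ ∈ hexEdges ∧ h₂ ∈ hexEdges ∧ (h₁ ∩ h₂).card = 1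

instance : Std.Symm HexAdj :=
  ⟨fun _ _ ⟨h₁, h₂, h⟩ => ⟨h₂, h₁, by rwa [Finset.inter_comm]⟩⟩

theorem hexAdj_reflTransGen :
    ∀ h₁ ∈ hexEdges, ∀ h₂ ∈ hexEdges, Relation.ReflTransGen HexAdj h₁ h₂ := by
  have e₁ : HexAdj {(0, true), (1, true)} {(1, true), (2, true)} := by unfold HexAdj; decide
  have e₂ : HexAdj {(1, true), (2, true)} {(2, true), (0, false)} := by unfold HexAdj; decide
  have e₃ : HexAdj {(2, true), (0, false)} {(0, false), (1, false)} := by unfold HexAdj; decide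
  have e₄ : HexAdj {(0, false), (1, false)} {(1, false), (2, false)} := by unfold HexAdj; decide
  have e₅ : HexAdj {(1, false), (2, false)} {(2, false), (0, true)} := by unfold HexAdj; decide
  have hbase : ∀ h ∈ hexEdges, Relation.ReflTransGen HexAdj {(0, true), (1, true)} h := by
    intro h hh
    simp only [hexEdges, Finset.mem_insert, Finset.mem_singleton] at hh
    have p₁ := Relation.ReflTransGen.single e₁
    have p₂ := p₁.tail e₂
    have p₃ := p₂.tail e₃
    have p₄ := p₃.tail e₄
    rcases hh with rfl | rfl | rfl | rfl | rfl | rfl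
    exacts [.refl, p₁, p₂, p₃, p₄, p₄.tail e₅]
  intro h₁ hh₁ h₂ hh₂
  exact (Std.Symm.symm _ _ (hbase h₁ hh₁)).trans (hbase h₂ hh₂)

namespace OneSidedCut

def hexVertex (p : Fin 3 × Bool) : V ⊕ (Fin 3 × Bool) ⊕ Unit := Sum.inr (Sum.inl p)

def apex : V ⊕ (Fin 3 × Bool) ⊕ Unit := Sum.inr (Sum.inr ())

theorem hexVertex_injective : Function.Injective (hexVertex (V := V)) :=
  fun _ _ h => by simpa [hexVertex] using h

theorem hexVertex_ne_apex (p : Fin 3 × Bool) : hexVertex (V := V) p ≠ apex := by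
  simp [hexVertex, apex]

variable [DecidableEq V] {w : Fin 3 → V} {σ : Finset V → Fin 3 → Bool}
  {faces : Finset (Finset V)}

abbrev cycleVertices (w : Fin 3 → V) : Finset V := {w 0, w 1, w 2}

noncomputable def liftFace (w : Fin 3 → V) (σ : Finset V → Fin 3 → Bool) (F : Finset V) :
    Finset (V ⊕ (Fin 3 × Bool) ⊕ Unit) :=
  F.image (renameOneSided w (σ F))

def capFace (h : Finset (Fin 3 × Bool)) : Finset (V ⊕ (Fin 3 × Bool) ⊕ Unit) :=
  insert apex (h.image hexVertex)

/-- Glues the cut back together; the apex, which has no preimage, goes to `w 0`. -/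
def proj (w : Fin 3 → V) : V ⊕ (Fin 3 × Bool) ⊕ Unit → V
  | Sum.inl x => x
  | Sum.inr (Sum.inl p) => w p.1
  | Sum.inr (Sum.inr _) => w 0

theorem mem_cycleVertices {x : V} : x ∈ cycleVertices w ↔ ∃ i, w i = x := by
  simp only [cycleVertices, Finset.mem_insert, Finset.mem_singleton, Fin.exists_fin_succ,
    Fin.exists_fin_zero]
  tauto

theorem proj_renameOneSided (b : Fin 3 → Bool) (x : V) : proj w (renameOneSided w b x) = x := by
  unfold renameOneSided
  split_ifs <;> simp_all [proj]

theorem renameOneSided_injective (b : Fin 3 → Bool) : Function.Injective (renameOneSided w b) :=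
  Function.LeftInverse.injective (proj_renameOneSided b)

theorem renameOneSided_of_notMem {b : Fin 3 → Bool} {x : V} (hx : x ∉ cycleVertices w) :
    renameOneSided w b x = Sum.inl x := by
  simp only [cycleVertices, Finset.mem_insert, Finset.mem_singleton, not_or] at hx
  simp [renameOneSided, hx]

theorem renameOneSided_apply (hw : Function.Injective w) (b : Fin 3 → Bool) (i : Fin 3) :
    renameOneSided w b (w i) = hexVertex (i, b i) := by
  fin_cases i <;> simp [renameOneSided, hexVertex, hw.eq_iff]

theorem renameOneSided_congr {b b' : Fin 3 → Bool} {x : V} (h : ∀ i, w i = x → b i = b' i) :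
    renameOneSided w b x = renameOneSided w b' x := by
  unfold renameOneSided
  split_ifs with h0 h1 h2
  · rw [h 0 h0.symm]
  · rw [h 1 h1.symm]
  · rw [h 2 h2.symm]
  · rfl

theorem renameOneSided_ne_apex (b : Fin 3 → Bool) (x : V) : renameOneSided w b x ≠ apex := by
  unfold renameOneSided apex
  split_ifs <;> simp

theorem mem_liftFace {F : Finset V} {u : V ⊕ (Fin 3 × Bool) ⊕ Unit} :
    u ∈ liftFace w σ F ↔ proj w u ∈ F ∧ renameOneSided w (σ F) (proj w u) = u := by
  refine ⟨fun hu => ?_, fun ⟨hF, hu⟩ => Finset.mem_image.2 ⟨_, hF, hu⟩⟩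
  obtain ⟨x, hx, rfl⟩ := Finset.mem_image.1 hu
  rw [proj_renameOneSided]
  exact ⟨hx, rfl⟩

theorem inl_mem_liftFace {F : Finset V} {x : V} :
    Sum.inl x ∈ liftFace w σ F ↔ x ∈ F ∧ x ∉ cycleVertices w := by
  refine mem_liftFace.trans (and_congr_right fun _ => ⟨fun h hx => ?_, renameOneSided_of_notMem⟩)
  obtain ⟨i, rfl⟩ := mem_cycleVertices.1 hx
  fin_cases i <;> simp [renameOneSided, proj] at h <;> split_ifs at h

theorem hexVertex_mem_liftFace (hw : Function.Injective w) {F : Finset V} {i : Fin 3}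
    {c : Bool} : hexVertex (i, c) ∈ liftFace w σ F ↔ w i ∈ F ∧ σ F i = c := by
  rw [mem_liftFace]
  change w i ∈ F ∧ renameOneSided w (σ F) (w i) = hexVertex (i, c) ↔ _
  rw [renameOneSided_apply hw, hexVertex_injective.eq_iff, Prod.mk.injEq]
  simp

theorem apex_notMem_liftFace {F : Finset V} : apex ∉ liftFace w σ F := fun h =>
  renameOneSided_ne_apex _ _ (mem_liftFace.1 h).2

theorem image_proj_liftFace (F : Finset V) : (liftFace w σ F).image (proj w) = F := by
  simp [liftFace, Finset.image_image, Function.comp_def, proj_renameOneSided]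

theorem liftFace_injective : Function.Injective (liftFace w σ) := fun F G h => by
  rw [← image_proj_liftFace (w := w) (σ := σ) F, h, image_proj_liftFace]

theorem card_liftFace (F : Finset V) : (liftFace w σ F).card = F.card :=
  Finset.card_image_of_injective _ (renameOneSided_injective _)

theorem liftFace_inter_liftFace {F G : Finset V}
    (hagree : ∀ x ∈ F ∩ G, renameOneSided w (σ F) x = renameOneSided w (σ G) x) :
    liftFace w σ F ∩ liftFace w σ G = (F ∩ G).image (renameOneSided w (σ F)) := by
  ext u
  rw [Finset.mem_inter, mem_liftFace, mem_liftFace, Finset.mem_image]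
  constructor
  · rintro ⟨⟨hF, hu⟩, hG, -⟩
    exact ⟨_, Finset.mem_inter.2 ⟨hF, hG⟩, hu⟩
  · rintro ⟨x, hx, rfl⟩
    rw [proj_renameOneSided]
    exact ⟨⟨(Finset.mem_inter.1 hx).1, rfl⟩, (Finset.mem_inter.1 hx).2, (hagree x hx).symm⟩

theorem mem_capFace {h : Finset (Fin 3 × Bool)} {u : V ⊕ (Fin 3 × Bool) ⊕ Unit} :
    u ∈ capFace h ↔ u = apex ∨ ∃ p ∈ h, hexVertex p = u := by
  simp [capFace]

theorem apex_mem_capFace (h : Finset (Fin 3 × Bool)) : apex (V := V) ∈ capFace h :=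
  Finset.mem_insert_self _ _

theorem inl_notMem_capFace (h : Finset (Fin 3 × Bool)) (x : V) :
    Sum.inl x ∉ capFace h := by
  simp [mem_capFace, apex, hexVertex]

theorem hexVertex_mem_capFace {h : Finset (Fin 3 × Bool)} {p : Fin 3 × Bool} :
    hexVertex (V := V) p ∈ capFace h ↔ p ∈ h := by
  simp [mem_capFace, hexVertex_ne_apex, hexVertex_injective.eq_iff]

theorem capFace_inter_capFace (h₁ h₂ : Finset (Fin 3 × Bool)) :
    capFace (V := V) h₁ ∩ capFace h₂ = capFace (h₁ ∩ h₂) := by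
  rw [capFace, capFace, capFace, ← Finset.insert_inter_distrib,
    Finset.image_inter _ _ hexVertex_injective]

theorem card_capFace (h : Finset (Fin 3 × Bool)) : (capFace (V := V) h).card = h.card + 1 := by
  rw [capFace, Finset.card_insert_of_notMem (by simp [hexVertex_ne_apex]),
    Finset.card_image_of_injective _ hexVertex_injective]

theorem capFace_injective : Function.Injective (capFace (V := V)) := fun h₁ h₂ h => by
  ext p
  rw [← hexVertex_mem_capFace (V := V), h, hexVertex_mem_capFace]

theorem liftFace_ne_capFace (F : Finset V) (h : Finset (Fin 3 × Bool)) :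
    liftFace w σ F ≠ capFace h := fun hFh =>
  apex_notMem_liftFace (hFh ▸ apex_mem_capFace h)

theorem liftFace_inter_capFace {F : Finset V} {h : Finset (Fin 3 × Bool)}
    (hsub : h.image hexVertex ⊆ liftFace w σ F) :
    liftFace w σ F ∩ capFace h = h.image hexVertex := by
  rw [capFace, Finset.inter_insert_of_notMem apex_notMem_liftFace]
  exact Finset.inter_eq_right.2 hsub

theorem image_hexVertex_subset_liftFace (hw : Function.Injective w) {F : Finset V}
    {i j : Fin 3} (hi : w i ∈ F) (hj : w j ∈ F) :
    ({(i, σ F i), (j, σ F j)} : Finset (Fin 3 × Bool)).image hexVertex ⊆ liftFace w σ F := by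
  rw [Finset.image_insert, Finset.image_singleton, Finset.insert_subset_iff,
    Finset.singleton_subset_iff]
  exact ⟨(hexVertex_mem_liftFace hw).2 ⟨hi, rfl⟩, (hexVertex_mem_liftFace hw).2 ⟨hj, rfl⟩⟩

theorem image_hexVertex_subset_liftFace_iff (hw : Function.Injective w) {F : Finset V}
    {h : Finset (Fin 3 × Bool)} (hh : h ∈ hexEdges) :
    h.image hexVertex ⊆ liftFace w σ F ↔ ∃ i j : Fin 3, i ≠ j ∧ ({w i, w j} : Finset V) ⊆ F ∧
      ({(i, σ F i), (j, σ F j)} : Finset (Fin 3 × Bool)) = h := by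
  obtain ⟨⟨i, c⟩, ⟨j, d⟩, hij, rfl⟩ := exists_eq_pair_of_mem_hexEdges h hh
  simp only [Finset.image_insert, Finset.image_singleton, Finset.insert_subset_iff,
    Finset.singleton_subset_iff, hexVertex_mem_liftFace hw]
  constructor
  · rintro ⟨⟨hi, rfl⟩, hj, rfl⟩
    exact ⟨i, j, hij, ⟨hi, hj⟩, rfl⟩
  · rintro ⟨i', j', -, hF, hpair⟩
    have hcorner : ∀ p ∈ ({(i', σ F i'), (j', σ F j')} : Finset (Fin 3 × Bool)),
        w p.1 ∈ F ∧ σ F p.1 = p.2 := by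
      simp only [Finset.mem_insert, Finset.mem_singleton]
      rintro p (rfl | rfl)
      exacts [⟨hF.1, rfl⟩, ⟨hF.2, rfl⟩]
    rw [hpair] at hcorner
    exact ⟨hcorner (i, c) (by simp), hcorner (j, d) (by simp)⟩

theorem image_hexVertex_subset_capFace {h h' : Finset (Fin 3 × Bool)} :
    h.image hexVertex ⊆ capFace (V := V) h' ↔ h ⊆ h' := by
  simp only [Finset.image_subset_iff, hexVertex_mem_capFace]
  rfl

theorem cutCapOneSided_eq :
    cutCapOneSided faces w σ = faces.image (liftFace w σ) ∪ hexEdges.image capFace := rfl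

theorem mem_cutCapOneSided {A : Finset (V ⊕ (Fin 3 × Bool) ⊕ Unit)} :
    A ∈ cutCapOneSided faces w σ ↔
      (∃ F ∈ faces, liftFace w σ F = A) ∨ ∃ h ∈ hexEdges, capFace h = A := by
  rw [cutCapOneSided_eq, Finset.mem_union, Finset.mem_image, Finset.mem_image]

theorem liftFace_mem {F : Finset V} (hF : F ∈ faces) :
    liftFace w σ F ∈ cutCapOneSided faces w σ :=
  mem_cutCapOneSided.2 (Or.inl ⟨F, hF, rfl⟩)

theorem capFace_mem {h : Finset (Fin 3 × Bool)} (hh : h ∈ hexEdges) :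
    capFace h ∈ cutCapOneSided faces w σ :=
  mem_cutCapOneSided.2 (Or.inr ⟨h, hh, rfl⟩)

theorem card_filter_cutCapOneSided (P : Finset (V ⊕ (Fin 3 × Bool) ⊕ Unit) → Prop)
    [DecidablePred P] :
    ((cutCapOneSided faces w σ).filter P).card =
      (faces.filter fun F => P (liftFace w σ F)).card +
        (hexEdges.filter fun h => P (capFace h)).card := by
  rw [cutCapOneSided_eq, Finset.filter_union, Finset.filter_image, Finset.filter_image,
    Finset.card_union_of_disjoint, Finset.card_image_of_injective _ liftFace_injective,
    Finset.card_image_of_injective _ capFace_injective]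
  simp only [Finset.disjoint_left, Finset.mem_image]
  rintro _ ⟨F, -, rfl⟩ ⟨h, -, hFh⟩
  exact liftFace_ne_capFace F h hFh.symm

theorem card_cutCapOneSided : (cutCapOneSided faces w σ).card = faces.card + 6 := by
  simpa [card_hexEdges] using card_filter_cutCapOneSided (faces := faces) (w := w) (σ := σ)
    (fun _ => True)


theorem exists_liftFace_eq_of_inl_mem {A : Finset (V ⊕ (Fin 3 × Bool) ⊕ Unit)} {x : V}
    (hA : A ∈ cutCapOneSided faces w σ) (hx : Sum.inl x ∈ A) :
    ∃ F ∈ faces, liftFace w σ F = A := by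
  rcases mem_cutCapOneSided.1 hA with hF | ⟨h, -, rfl⟩
  · exact hF
  · exact absurd hx (inl_notMem_capFace h x)

theorem exists_capFace_eq_of_apex_mem {A : Finset (V ⊕ (Fin 3 × Bool) ⊕ Unit)}
    (hA : A ∈ cutCapOneSided faces w σ) (hx : apex ∈ A) :
    ∃ h ∈ hexEdges, capFace h = A := by
  rcases mem_cutCapOneSided.1 hA with ⟨F, -, rfl⟩ | hh
  · exact absurd hx apex_notMem_liftFace
  · exact hh

theorem card_of_mem_cutCapOneSided (h3 : ∀ F ∈ faces, F.card = 3) :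
    ∀ A ∈ cutCapOneSided faces w σ, A.card = 3 := by
  intro A hA
  rcases mem_cutCapOneSided.1 hA with ⟨F, hF, rfl⟩ | ⟨h, hh, rfl⟩
  · rw [card_liftFace, h3 F hF]
  · rw [card_capFace, card_of_mem_hexEdges h hh]

theorem _root_.CoherentOneSided.renameOneSided_eq (hσ : CoherentOneSided faces w σ)
    {F G : Finset V} (hF : F ∈ faces) (hG : G ∈ faces) (h2 : (F ∩ G).card = 2)
    (hnc : ¬ F ∩ G ⊆ cycleVertices w) {x : V} (hx : x ∈ F ∩ G) :
    renameOneSided w (σ F) x = renameOneSided w (σ G) x :=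
  renameOneSided_congr fun i hi => hσ.1 F hF G hG i h2 (hi ▸ hx) hnc

theorem _root_.CoherentOneSided.card_filter_image_hexVertex_subset
    (hσ : CoherentOneSided faces w σ) (hw : Function.Injective w) {h : Finset (Fin 3 × Bool)}
    (hh : h ∈ hexEdges) :
    (faces.filter fun F => h.image hexVertex ⊆ liftFace w σ F).card = 1 := by
  rw [Finset.filter_congr fun F _ => image_hexVertex_subset_liftFace_iff hw hh]
  exact hσ.2.2 h hh

theorem card_filter_apex_hexVertex_subset (p : Fin 3 × Bool) :
    ((cutCapOneSided faces w σ).filter fun A => {apex, hexVertex p} ⊆ A).card = 2 := by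
  rw [card_filter_cutCapOneSided]
  simp [Finset.insert_subset_iff, apex_notMem_liftFace, apex_mem_capFace, hexVertex_mem_capFace,
    card_filter_mem_hexEdges]

theorem card_filter_image_hexVertex_subset (hw : Function.Injective w)
    (hσ : CoherentOneSided faces w σ) {h : Finset (Fin 3 × Bool)} (hh : h ∈ hexEdges) :
    ((cutCapOneSided faces w σ).filter fun A => h.image hexVertex ⊆ A).card = 2 := by
  rw [card_filter_cutCapOneSided, hσ.card_filter_image_hexVertex_subset hw hh,
    Finset.filter_congr fun _ _ => image_hexVertex_subset_capFace, filter_superset_hexEdges h hh,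
    Finset.card_singleton]

theorem inl_pair_subset_liftFace_iff (hT : IsTriangulation faces)
    (hσ : CoherentOneSided faces w σ) {x z : V} (hx : x ∉ cycleVertices w) (hxz : x ≠ z)
    {F₀ F : Finset V} (hF₀ : F₀ ∈ faces) (hxF₀ : x ∈ F₀) (hzF₀ : z ∈ F₀) (hF : F ∈ faces) :
    {Sum.inl x, renameOneSided w (σ F₀) z} ⊆ liftFace w σ F ↔ x ∈ F ∧ z ∈ F := by
  simp only [Finset.insert_subset_iff, Finset.singleton_subset_iff, inl_mem_liftFace, hx,
    not_false_eq_true, and_true]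
  refine and_congr_right fun hxF => ⟨fun hz => ?_, fun hzF => ?_⟩
  · simpa [proj_renameOneSided] using (mem_liftFace.1 hz).1
  · have hagree : renameOneSided w (σ F) z = renameOneSided w (σ F₀) z := by
      by_cases hFF₀ : F = F₀
      · rw [hFF₀]
      have hxI : x ∈ F ∩ F₀ := Finset.mem_inter.2 ⟨hxF, hxF₀⟩
      have hzI : z ∈ F ∩ F₀ := Finset.mem_inter.2 ⟨hzF, hzF₀⟩
      exact hσ.renameOneSided_eq hF hF₀
        (card_inter_eq_two (hT.card_three F hF) (hT.card_three F₀ hF₀) hFF₀ hxz hxI hzI)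
        (fun hsub => hx (hsub hxI)) hzI
    exact hagree ▸ Finset.mem_image_of_mem _ hzF

theorem card_filter_inl_pair_subset (hT : IsTriangulation faces)
    (hσ : CoherentOneSided faces w σ) {x z : V} (hx : x ∉ cycleVertices w) (hxz : x ≠ z)
    {F₀ : Finset V} (hF₀ : F₀ ∈ faces) (hxF₀ : x ∈ F₀) (hzF₀ : z ∈ F₀) :
    ((cutCapOneSided faces w σ).filter fun A =>
      {Sum.inl x, renameOneSided w (σ F₀) z} ⊆ A).card = 2 := by
  rw [card_filter_cutCapOneSided,
    Finset.filter_congr fun F hF => inl_pair_subset_liftFace_iff hT hσ hx hxz hF₀ hxF₀ hzF₀ hF]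
  have hedge := hT.edge_two_faces {x, z} (Finset.card_pair hxz)
    ⟨F₀, hF₀, Finset.insert_subset hxF₀ (Finset.singleton_subset_iff.2 hzF₀)⟩
  simp only [Finset.insert_subset_iff, Finset.singleton_subset_iff] at hedge
  simp [hedge, Finset.insert_subset_iff, inl_notMem_capFace]

theorem card_filter_pair_renameOneSided_subset (hw : Function.Injective w)
    (hT : IsTriangulation faces) (hσ : CoherentOneSided faces w σ) {F₀ : Finset V}
    (hF₀ : F₀ ∈ faces) {x y : V} (hx : x ∈ F₀) (hy : y ∈ F₀) (hxy : x ≠ y) :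
    ((cutCapOneSided faces w σ).filter fun A =>
      {renameOneSided w (σ F₀) x, renameOneSided w (σ F₀) y} ⊆ A).card = 2 := by
  by_cases hxC : x ∈ cycleVertices w
  · by_cases hyC : y ∈ cycleVertices w
    · obtain ⟨i, rfl⟩ := mem_cycleVertices.1 hxC
      obtain ⟨j, rfl⟩ := mem_cycleVertices.1 hyC
      have hij : i ≠ j := fun hij => hxy (congrArg w hij)
      have hhex :=
        hσ.2.1 F₀ hF₀ i j hij (Finset.insert_subset hx (Finset.singleton_subset_iff.2 hy))
      simpa [renameOneSided_apply hw] using card_filter_image_hexVertex_subset hw hσ hhex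
    · rw [Finset.pair_comm, renameOneSided_of_notMem hyC]
      exact card_filter_inl_pair_subset hT hσ hyC hxy.symm hF₀ hy hx
  · rw [renameOneSided_of_notMem hxC]
    exact card_filter_inl_pair_subset hT hσ hxC hxy hF₀ hx hy

theorem card_filter_subset_capFace (hw : Function.Injective w)
    (hσ : CoherentOneSided faces w σ) {h : Finset (Fin 3 × Bool)} (hh : h ∈ hexEdges)
    {e : Finset (V ⊕ (Fin 3 × Bool) ⊕ Unit)} (he : e.card = 2) (heh : e ⊆ capFace h) :
    ((cutCapOneSided faces w σ).filter fun A => e ⊆ A).card = 2 := by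
  by_cases hap : apex ∈ e
  · obtain ⟨u, hu⟩ := Finset.card_eq_one.1
      (by rw [Finset.card_erase_of_mem hap, he] : (e.erase apex).card = 1)
    obtain ⟨p, -, rfl⟩ := Finset.mem_image.1
      (Finset.subset_insert_iff.1 heh (hu ▸ Finset.mem_singleton_self u))
    rw [← Finset.insert_erase hap, hu]
    exact card_filter_apex_hexVertex_subset p
  · have hsub : e ⊆ h.image hexVertex := (Finset.subset_insert_iff_of_notMem hap).1 heh
    rw [Finset.eq_of_subset_of_card_le hsub (by
      rw [he, Finset.card_image_of_injective _ hexVertex_injective, card_of_mem_hexEdges h hh])]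
    exact card_filter_image_hexVertex_subset hw hσ hh

theorem edge_two_faces_cutCapOneSided (hw : Function.Injective w) (hT : IsTriangulation faces)
    (hσ : CoherentOneSided faces w σ) :
    ∀ e : Finset (V ⊕ (Fin 3 × Bool) ⊕ Unit), e.card = 2 →
      (∃ A ∈ cutCapOneSided faces w σ, e ⊆ A) →
      ((cutCapOneSided faces w σ).filter fun A => e ⊆ A).card = 2 := by
  rintro e he ⟨A, hA, heA⟩
  rcases mem_cutCapOneSided.1 hA with ⟨F, hF, rfl⟩ | ⟨h, hh, rfl⟩
  · obtain ⟨u, v, huv, rfl⟩ := Finset.card_eq_two.1 he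
    obtain ⟨x, hx, rfl⟩ := Finset.mem_image.1 (heA (Finset.mem_insert_self u {v}))
    obtain ⟨y, hy, rfl⟩ :=
      Finset.mem_image.1 (heA (Finset.mem_insert_of_mem (Finset.mem_singleton_self v)))
    exact card_filter_pair_renameOneSided_subset hw hT hσ hF hx hy fun hxy => huv (hxy ▸ rfl)
  · exact card_filter_subset_capFace hw hσ hh he heA

theorem linkAdj_liftFace (hσ : CoherentOneSided faces w σ) {x : V} {F G : Finset V}
    (hFG : LinkAdj faces x F G) (hnc : ¬ F ∩ G ⊆ cycleVertices w) :
    LinkAdj (cutCapOneSided faces w σ) (renameOneSided w (σ F) x)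
      (liftFace w σ F) (liftFace w σ G) := by
  obtain ⟨hF, hG, hx, h2⟩ := hFG
  have hinter := liftFace_inter_liftFace fun y hy => hσ.renameOneSided_eq hF hG h2 hnc hy
  refine ⟨liftFace_mem hF, liftFace_mem hG, ?_, ?_⟩
  · rw [hinter]
    exact Finset.mem_image_of_mem _ hx
  · rw [hinter, Finset.card_image_of_injective _ (renameOneSided_injective _), h2]

theorem linkAdj_liftFace_capFace (hw : Function.Injective w) (hσ : CoherentOneSided faces w σ)
    {F : Finset V} (hF : F ∈ faces) {i j : Fin 3} (hij : i ≠ j) (hi : w i ∈ F) (hj : w j ∈ F) :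
    LinkAdj (cutCapOneSided faces w σ) (hexVertex (i, σ F i))
      (liftFace w σ F) (capFace {(i, σ F i), (j, σ F j)}) := by
  have hsub := image_hexVertex_subset_liftFace (σ := σ) hw hi hj
  have hhex := hσ.2.1 F hF i j hij (Finset.insert_subset hi (Finset.singleton_subset_iff.2 hj))
  refine ⟨liftFace_mem hF, capFace_mem hhex, ?_, ?_⟩
  · rw [liftFace_inter_capFace hsub]
    exact Finset.mem_image_of_mem _ (Finset.mem_insert_self _ _)
  · rw [liftFace_inter_capFace hsub, Finset.card_image_of_injective _ hexVertex_injective,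
      card_of_mem_hexEdges _ hhex]

/-- Walking around `wᵢ` in the link, the lifted faces stay linked at `(i, σ F i)` until they
meet a second cycle vertex, i.e. a side of the boundary hexagon. -/
theorem exists_capFace_reflTransGen_linkAdj (hw : Function.Injective w)
    (hT : IsTriangulation faces) (hσ : CoherentOneSided faces w σ)
    (hcyc : IsTriCycle faces (cycleVertices w)) {i : Fin 3} {F : Finset V} (hF : F ∈ faces)
    (hi : w i ∈ F) :
    ∃ h ∈ hexEdges, (i, σ F i) ∈ h ∧ Relation.ReflTransGen
      (LinkAdj (cutCapOneSided faces w σ) (hexVertex (i, σ F i))) (liftFace w σ F) (capFace h) := by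
  have hstop : ∀ F ∈ faces, ∀ k ≠ i, w i ∈ F → w k ∈ F →
      ∃ h ∈ hexEdges, (i, σ F i) ∈ h ∧ Relation.ReflTransGen
        (LinkAdj (cutCapOneSided faces w σ) (hexVertex (i, σ F i))) (liftFace w σ F)
          (capFace h) :=
    fun F hF k hki hi hk => ⟨_, hσ.2.1 F hF i k hki.symm
      (Finset.insert_subset hi (Finset.singleton_subset_iff.2 hk)), Finset.mem_insert_self _ _,
      .single (linkAdj_liftFace_capFace hw hσ hF hki.symm hi hk)⟩
  obtain ⟨j, hji⟩ := exists_ne i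
  obtain ⟨G, hG, hiG, hjG⟩ :=
    hcyc.exists_face (mem_cycleVertices.2 ⟨i, rfl⟩) (mem_cycleVertices.2 ⟨j, rfl⟩) (hw.ne hji.symm)
  refine Relation.ReflTransGen.head_induction_on (motive := fun a _ => ∃ h ∈ hexEdges,
      (i, σ a i) ∈ h ∧ Relation.ReflTransGen
        (LinkAdj (cutCapOneSided faces w σ) (hexVertex (i, σ a i))) (liftFace w σ a) (capFace h))
    (hT.link_connected (w i) F hF G hG hi hiG) (hstop G hG j hji hiG hjG) ?_
  rintro a a₂ hstep - ⟨h, hh, hih, hpath⟩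
  obtain ⟨ha, ha₂, hia, h2⟩ := hstep
  by_cases hk : ∃ k ≠ i, w k ∈ a
  · obtain ⟨k, hki, hka⟩ := hk
    exact hstop a ha k hki (Finset.mem_inter.1 hia).1 hka
  push Not at hk
  obtain ⟨y, hy, hyi⟩ := Finset.exists_mem_ne (by rw [h2]; norm_num) (w i)
  have hnc : ¬ a ∩ a₂ ⊆ cycleVertices w := fun hsub => by
    obtain ⟨k, rfl⟩ := mem_cycleVertices.1 (hsub hy)
    exact hk k (fun hki => hyi (hki ▸ rfl)) (Finset.mem_inter.1 hy).1
  have hσa : σ a i = σ a₂ i := hσ.1 a ha a₂ ha₂ i h2 hia hnc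
  have hlink := linkAdj_liftFace hσ ⟨ha, ha₂, hia, h2⟩ hnc
  rw [renameOneSided_apply hw, hσa] at hlink
  rw [hσa]
  exact ⟨h, hh, hih, .head hlink hpath⟩

theorem capFace_reflTransGen_linkAdj {p : Fin 3 × Bool} {h₁ h₂ : Finset (Fin 3 × Bool)}
    (hh₁ : h₁ ∈ hexEdges) (hh₂ : h₂ ∈ hexEdges) (hp₁ : p ∈ h₁) (hp₂ : p ∈ h₂) :
    Relation.ReflTransGen (LinkAdj (cutCapOneSided faces w σ) (hexVertex p))
      (capFace h₁) (capFace h₂) := by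
  rcases eq_or_ne h₁ h₂ with rfl | hne
  · rfl
  have hp : p ∈ h₁ ∩ h₂ := Finset.mem_inter.2 ⟨hp₁, hp₂⟩
  have hcard : (h₁ ∩ h₂).card = 1 :=
    le_antisymm (card_inter_le_one_of_mem_hexEdges _ hh₁ _ hh₂ hne) (Finset.card_pos.2 ⟨p, hp⟩)
  refine .single ⟨capFace_mem hh₁, capFace_mem hh₂, ?_, ?_⟩
  · rw [capFace_inter_capFace, hexVertex_mem_capFace]
    exact hp
  · rw [capFace_inter_capFace, card_capFace, hcard]

theorem reflTransGen_linkAdj_inl (hT : IsTriangulation faces) (hσ : CoherentOneSided faces w σ)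
    {x : V} {A B : Finset (V ⊕ (Fin 3 × Bool) ⊕ Unit)} (hA : A ∈ cutCapOneSided faces w σ)
    (hB : B ∈ cutCapOneSided faces w σ) (hxA : Sum.inl x ∈ A) (hxB : Sum.inl x ∈ B) :
    Relation.ReflTransGen (LinkAdj (cutCapOneSided faces w σ) (Sum.inl x)) A B := by
  obtain ⟨F, hF, rfl⟩ := exists_liftFace_eq_of_inl_mem hA hxA
  obtain ⟨G, hG, rfl⟩ := exists_liftFace_eq_of_inl_mem hB hxB
  obtain ⟨hxF, hx⟩ := inl_mem_liftFace.1 hxA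
  refine Relation.ReflTransGen.lift (liftFace w σ) (fun a b hab => ?_) _ _
    (hT.link_connected x F hF G hG hxF (inl_mem_liftFace.1 hxB).1)
  have hlink := linkAdj_liftFace hσ hab fun hsub => hx (hsub hab.2.2.1)
  rwa [renameOneSided_of_notMem hx] at hlink

theorem reflTransGen_linkAdj_hexVertex (hw : Function.Injective w) (hT : IsTriangulation faces)
    (hσ : CoherentOneSided faces w σ) (hcyc : IsTriCycle faces (cycleVertices w))
    {p : Fin 3 × Bool} {A B : Finset (V ⊕ (Fin 3 × Bool) ⊕ Unit)}
    (hA : A ∈ cutCapOneSided faces w σ) (hB : B ∈ cutCapOneSided faces w σ)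
    (hpA : hexVertex p ∈ A) (hpB : hexVertex p ∈ B) :
    Relation.ReflTransGen (LinkAdj (cutCapOneSided faces w σ) (hexVertex p)) A B := by
  have hcap : ∀ A ∈ cutCapOneSided faces w σ, hexVertex p ∈ A → ∃ h ∈ hexEdges, p ∈ h ∧
      Relation.ReflTransGen (LinkAdj (cutCapOneSided faces w σ) (hexVertex p)) A (capFace h) := by
    intro A hA hpA
    rcases mem_cutCapOneSided.1 hA with ⟨F, hF, rfl⟩ | ⟨h, hh, rfl⟩
    · obtain ⟨i, c⟩ := p
      obtain ⟨hi, rfl⟩ := (hexVertex_mem_liftFace hw).1 hpA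
      exact exists_capFace_reflTransGen_linkAdj hw hT hσ hcyc hF hi
    · exact ⟨h, hh, hexVertex_mem_capFace.1 hpA, .refl⟩
  obtain ⟨h₁, hh₁, hp₁, hA₁⟩ := hcap A hA hpA
  obtain ⟨h₂, hh₂, hp₂, hB₂⟩ := hcap B hB hpB
  exact (hA₁.trans (capFace_reflTransGen_linkAdj hh₁ hh₂ hp₁ hp₂)).trans (Std.Symm.symm _ _ hB₂)

theorem reflTransGen_linkAdj_apex {A B : Finset (V ⊕ (Fin 3 × Bool) ⊕ Unit)}
    (hA : A ∈ cutCapOneSided faces w σ) (hB : B ∈ cutCapOneSided faces w σ)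
    (hA' : apex ∈ A) (hB' : apex ∈ B) :
    Relation.ReflTransGen (LinkAdj (cutCapOneSided faces w σ) apex) A B := by
  obtain ⟨h₁, hh₁, rfl⟩ := exists_capFace_eq_of_apex_mem hA hA'
  obtain ⟨h₂, hh₂, rfl⟩ := exists_capFace_eq_of_apex_mem hB hB'
  refine Relation.ReflTransGen.lift capFace (fun a b ⟨ha, hb, hab⟩ => ?_) _ _
    (hexAdj_reflTransGen h₁ hh₁ h₂ hh₂)
  exact ⟨capFace_mem ha, capFace_mem hb, by rw [capFace_inter_capFace]; exact apex_mem_capFace _,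
    by rw [capFace_inter_capFace, card_capFace, hab]⟩

theorem link_connected_cutCapOneSided (hw : Function.Injective w) (hT : IsTriangulation faces)
    (hσ : CoherentOneSided faces w σ) (hcyc : IsTriCycle faces (cycleVertices w)) :
    ∀ v, ∀ A ∈ cutCapOneSided faces w σ, ∀ B ∈ cutCapOneSided faces w σ, v ∈ A → v ∈ B →
      Relation.ReflTransGen (LinkAdj (cutCapOneSided faces w σ) v) A B := by
  rintro (x | p | ⟨⟨⟩⟩) A hA B hB hvA hvB
  · exact reflTransGen_linkAdj_inl hT hσ hA hB hvA hvB
  · exact reflTransGen_linkAdj_hexVertex hw hT hσ hcyc hA hB hvA hvB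
  · exact reflTransGen_linkAdj_apex hA hB hvA hvB

theorem faceAdj_liftFace (hσ : CoherentOneSided faces w σ) {F G : Finset V}
    (hFG : SeparatesRel faces (cycleVertices w) F G) :
    FaceAdj (cutCapOneSided faces w σ) (liftFace w σ F) (liftFace w σ G) := by
  obtain ⟨hF, hG, h2, hnc⟩ := hFG
  refine ⟨liftFace_mem hF, liftFace_mem hG, ?_⟩
  rw [liftFace_inter_liftFace fun y hy => hσ.renameOneSided_eq hF hG h2 hnc hy,
    Finset.card_image_of_injective _ (renameOneSided_injective _), h2]

theorem exists_faceAdj_capFace_liftFace (hw : Function.Injective w)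
    (hσ : CoherentOneSided faces w σ) {h : Finset (Fin 3 × Bool)} (hh : h ∈ hexEdges) :
    ∃ F ∈ faces, FaceAdj (cutCapOneSided faces w σ) (capFace h) (liftFace w σ F) := by
  obtain ⟨F, hF⟩ := Finset.card_eq_one.1 (hσ.card_filter_image_hexVertex_subset hw hh)
  obtain ⟨hFf, hsub⟩ := Finset.mem_filter.1 (hF ▸ Finset.mem_singleton_self F)
  refine ⟨F, hFf, capFace_mem hh, liftFace_mem hFf, ?_⟩
  rw [Finset.inter_comm, liftFace_inter_capFace hsub,
    Finset.card_image_of_injective _ hexVertex_injective, card_of_mem_hexEdges h hh]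

theorem connected_cutCapOneSided (hw : Function.Injective w) (hσ : CoherentOneSided faces w σ)
    (hns : Nonseparating faces (cycleVertices w)) :
    ∀ A ∈ cutCapOneSided faces w σ, ∀ B ∈ cutCapOneSided faces w σ,
      Relation.ReflTransGen (FaceAdj (cutCapOneSided faces w σ)) A B := by
  have hlift : ∀ A ∈ cutCapOneSided faces w σ, ∃ F ∈ faces,
      Relation.ReflTransGen (FaceAdj (cutCapOneSided faces w σ)) A (liftFace w σ F) := by
    intro A hA
    rcases mem_cutCapOneSided.1 hA with ⟨F, hF, rfl⟩ | ⟨h, hh, rfl⟩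
    · exact ⟨F, hF, .refl⟩
    · obtain ⟨F, hF, hadj⟩ := exists_faceAdj_capFace_liftFace hw hσ hh
      exact ⟨F, hF, .single hadj⟩
  intro A hA B hB
  obtain ⟨F, hF, hAF⟩ := hlift A hA
  obtain ⟨G, hG, hBG⟩ := hlift B hB
  have hFG := Relation.ReflTransGen.lift (liftFace w σ) (fun _ _ hab => faceAdj_liftFace hσ hab) _ _
    (hns F hF G hG)
  exact (hAF.trans hFG).trans (Std.Symm.symm _ _ hBG)

theorem isTriangulation_cutCapOneSided (hT : IsTriangulation faces) (hw : Function.Injective w)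
    (hcyc : IsTriCycle faces (cycleVertices w)) (hns : Nonseparating faces (cycleVertices w))
    (hσ : CoherentOneSided faces w σ) : IsTriangulation (cutCapOneSided faces w σ) where
  nonempty := ⟨_, capFace_mem (h := {(0, true), (1, true)}) (by decide)⟩
  card_three := card_of_mem_cutCapOneSided hT.card_three
  edge_two_faces := edge_two_faces_cutCapOneSided hw hT hσ
  link_connected := link_connected_cutCapOneSided hw hT hσ hcyc
  connected := connected_cutCapOneSided hw hσ hns

theorem vertexSet_cutCapOneSided :
    vertexSet (cutCapOneSided faces w σ) =
      (vertexSet faces \ cycleVertices w).disjSum Finset.univ := by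
  ext u
  simp only [Finset.mem_disjSum, vertexSet, Finset.mem_biUnion, id, Finset.mem_sdiff,
    Finset.mem_univ, true_and]
  constructor
  · rintro ⟨A, hA, hu⟩
    rcases u with x | q
    · obtain ⟨F, hF, rfl⟩ := exists_liftFace_eq_of_inl_mem hA hu
      obtain ⟨hxF, hx⟩ := inl_mem_liftFace.1 hu
      exact Or.inl ⟨x, ⟨⟨F, hF, hxF⟩, hx⟩, rfl⟩
    · exact Or.inr ⟨q, rfl⟩
  · rintro (⟨x, ⟨⟨F, hF, hxF⟩, hx⟩, rfl⟩ | ⟨p | ⟨⟨⟩⟩, rfl⟩)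
    · exact ⟨liftFace w σ F, liftFace_mem hF, inl_mem_liftFace.2 ⟨hxF, hx⟩⟩
    · obtain ⟨h, hh, hp⟩ := exists_mem_hexEdges_mem p
      exact ⟨capFace h, capFace_mem hh, hexVertex_mem_capFace.2 hp⟩
    · exact ⟨capFace {(0, true), (1, true)}, capFace_mem (by decide), apex_mem_capFace _⟩

theorem card_vertexSet_cutCapOneSided (hcyc : IsTriCycle faces (cycleVertices w)) :
    (vertexSet (cutCapOneSided faces w σ)).card = (vertexSet faces).card + 4 := by
  have hsub := hcyc.subset_vertexSet
  have hle := Finset.card_le_card hsub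
  rw [hcyc.1] at hle
  rw [vertexSet_cutCapOneSided, Finset.card_disjSum, Finset.card_sdiff_of_subset hsub, hcyc.1,
    Finset.card_univ]
  simp only [Fintype.card_sum, Fintype.card_prod, Fintype.card_fin, Fintype.card_bool,
    Fintype.card_unit]
  omega

theorem eulerChar_cutCapOneSided (hT : IsTriangulation faces) (hw : Function.Injective w)
    (hcyc : IsTriCycle faces (cycleVertices w)) (hσ : CoherentOneSided faces w σ) :
    eulerChar (cutCapOneSided faces w σ) = eulerChar faces + 1 := by
  have hE := two_mul_card_edgeSet hT.card_three hT.edge_two_faces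
  have hE' := two_mul_card_edgeSet (card_of_mem_cutCapOneSided (σ := σ) hT.card_three)
    (edge_two_faces_cutCapOneSided hw hT hσ)
  rw [card_cutCapOneSided] at hE'
  have hV := card_vertexSet_cutCapOneSided (σ := σ) hcyc
  unfold eulerChar
  rw [hV, card_cutCapOneSided]
  omega

end OneSidedCut

theorem stmt8_general [DecidableEq V] (faces : Finset (Finset V)) (h : IsTriangulation faces)
    (w : Fin 3 → V) (hw : Function.Injective w)
    (hcyc : IsTriCycle faces {w 0, w 1, w 2})
    (hns : Nonseparating faces {w 0, w 1, w 2})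
    (σ : Finset V → Fin 3 → Bool) (hσ : CoherentOneSided faces w σ) :
    IsTriangulation (cutCapOneSided faces w σ) ∧
    eulerGenus (cutCapOneSided faces w σ) = eulerGenus faces - 1 := by
  refine ⟨OneSidedCut.isTriangulation_cutCapOneSided h hw hcyc hns hσ, ?_⟩
  rw [eulerGenus, eulerGenus, OneSidedCut.eulerChar_cutCapOneSided h hw hcyc hσ]
  ring

/-- cutting a triangulation along a nonseparating one-sided 3-cycle and
capping the boundary hexagon with a new vertex yields a triangulation of a closed
surface whose Euler genus is one less. -/
theorem stmt8 [DecidableEq V] (faces : Finset (Finset V)) (h : IsTriangulation faces)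
    (w : Fin 3 → V) (hw : Function.Injective w)
    (hcyc : IsTriCycle faces {w 0, w 1, w 2})
    (hns : Nonseparating faces {w 0, w 1, w 2})
    (hos : OneSided faces {w 0, w 1, w 2})
    (σ : Finset V → Fin 3 → Bool) (hσ : CoherentOneSided faces w σ) :
    IsTriangulation (cutCapOneSided faces w σ) ∧
    eulerGenus (cutCapOneSided faces w σ) = eulerGenus faces - 1 :=
  stmt8_general faces h w hw hcyc hns σ hσ
end

section
/- In an irreducible triangulation of a closed surface other than the sphere, every vertex has degree at least 4. -/
open Finset

open scoped Classical

/-! Combinatorial model of triangulations of closed surfaces.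
A triangulation is encoded by its finite set of triangular faces (3-element
vertex sets).  Surface-ness is expressed by: every edge lies in exactly two
faces, the link of every vertex is connected (hence a single cycle), and the
whole complex is connected. -/

variable {V : Type*} {W : Type*}

section Helpers

variable [DecidableEq V]

lemma mem_vertexSet_iff {faces : Finset (Finset V)} {x : V} :
    x ∈ vertexSet faces ↔ ∃ F ∈ faces, x ∈ F := by
  simp [vertexSet]

lemma pair_mem_edgeSet {faces : Finset (Finset V)} {x y : V} {F : Finset V}
    (hF : F ∈ faces) (hxy : x ≠ y) (hx : x ∈ F) (hy : y ∈ F) :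
    ({x, y} : Finset V) ∈ edgeSet faces := by
  unfold edgeSet
  rw [Finset.mem_filter, Finset.mem_powersetCard]
  refine ⟨⟨?_, Finset.card_pair hxy⟩, F, hF, ?_⟩ <;>
    · intro z hz
      rcases Finset.mem_insert.mp hz with rfl | hz
      · first
          | exact mem_vertexSet_iff.mpr ⟨F, hF, hx⟩
          | exact hx
      · rw [Finset.mem_singleton] at hz; subst hz
        first
          | exact mem_vertexSet_iff.mpr ⟨F, hF, hy⟩
          | exact hy

lemma exists_second_face {faces : Finset (Finset V)} (ht : IsTriangulation faces)
    {e F : Finset V} (he : e.card = 2) (hF : F ∈ faces) (hef : e ⊆ F) :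
    ∃ G ∈ faces, G ≠ F ∧ e ⊆ G := by
  have h2 := ht.edge_two_faces e he ⟨F, hF, hef⟩
  have hFf : F ∈ faces.filter (fun G => e ⊆ G) := by
    simp [Finset.mem_filter, hF, hef]
  obtain ⟨A, B, hAB, hfe⟩ := Finset.card_eq_two.mp h2
  have hA : A ∈ faces.filter (fun G => e ⊆ G) := by rw [hfe]; simp
  have hB : B ∈ faces.filter (fun G => e ⊆ G) := by rw [hfe]; simp
  rw [hfe] at hFf
  rcases Finset.mem_insert.mp hFf with rfl | hFB
  · obtain ⟨hBf, hBe⟩ := Finset.mem_filter.mp hB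
    exact ⟨B, hBf, hAB.symm, hBe⟩
  · rw [Finset.mem_singleton] at hFB; subst hFB
    obtain ⟨hAf, hAe⟩ := Finset.mem_filter.mp hA
    exact ⟨A, hAf, hAB, hAe⟩

lemma face_eq_of_subset {faces : Finset (Finset V)} (ht : IsTriangulation faces)
    {e F1 F2 B : Finset V} (he : e.card = 2) (h1 : F1 ∈ faces) (h2 : F2 ∈ faces)
    (hne : F1 ≠ F2) (he1 : e ⊆ F1) (he2 : e ⊆ F2) (hB : B ∈ faces) (heB : e ⊆ B) :
    B = F1 ∨ B = F2 := by
  have hcard := ht.edge_two_faces e he ⟨F1, h1, he1⟩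
  have hsub : ({F1, F2} : Finset (Finset V)) ⊆ faces.filter (fun G => e ⊆ G) := by
    intro X hX
    rcases Finset.mem_insert.mp hX with rfl | hX
    · simp [Finset.mem_filter, h1, he1]
    · rw [Finset.mem_singleton] at hX; subst hX
      simp [Finset.mem_filter, h2, he2]
  have heq : ({F1, F2} : Finset (Finset V)) = faces.filter (fun G => e ⊆ G) :=
    Finset.eq_of_subset_of_card_le hsub (by rw [hcard, Finset.card_pair hne])
  have : B ∈ ({F1, F2} : Finset (Finset V)) := by
    rw [heq]; simp [Finset.mem_filter, hB, heB]
  simpa using this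

lemma cyc_of_triple {x y z : V} (hxy : x ≠ y) (hxz : x ≠ z) (hyz : y ≠ z) :
    IsCyclicOrientation ({x, y, z} : Finset V) ({(x,y),(y,z),(z,x)} : Finset (V × V)) := by
  refine ⟨?_, ?_, ?_⟩
  · rw [Finset.card_insert_of_notMem (by simp [Prod.ext_iff]; tauto),
      Finset.card_insert_of_notMem (by simp [Prod.ext_iff]; tauto), Finset.card_singleton]
  · intro p hp
    rcases Finset.mem_insert.mp hp with rfl | hp
    · exact ⟨by simp, by simp, hxy⟩
    rcases Finset.mem_insert.mp hp with rfl | hp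
    · exact ⟨by simp, by simp, hyz⟩
    · rw [Finset.mem_singleton] at hp; subst hp
      exact ⟨by simp, by simp, hxz.symm⟩
  · intro u hu
    have hsx : Finset.filter (fun p => p.1 = x) ({(x,y),(y,z),(z,x)} : Finset (V × V)) = {(x,y)} := by
      ext p
      simp only [Finset.mem_filter, Finset.mem_insert, Finset.mem_singleton]
      constructor
      · rintro ⟨(rfl | rfl | rfl), h1⟩ <;> simp_all
      · rintro rfl; simp
    have hsy : Finset.filter (fun p => p.1 = y) ({(x,y),(y,z),(z,x)} : Finset (V × V)) = {(y,z)} := by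
      ext p
      simp only [Finset.mem_filter, Finset.mem_insert, Finset.mem_singleton]
      constructor
      · rintro ⟨(rfl | rfl | rfl), h1⟩ <;> simp_all
      · rintro rfl; simp
    have hsz : Finset.filter (fun p => p.1 = z) ({(x,y),(y,z),(z,x)} : Finset (V × V)) = {(z,x)} := by
      ext p
      simp only [Finset.mem_filter, Finset.mem_insert, Finset.mem_singleton]
      constructor
      · rintro ⟨(rfl | rfl | rfl), h1⟩ <;> simp_all
      · rintro rfl; simp
    have htx : Finset.filter (fun p => p.2 = x) ({(x,y),(y,z),(z,x)} : Finset (V × V)) = {(z,x)} := by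
      ext p
      simp only [Finset.mem_filter, Finset.mem_insert, Finset.mem_singleton]
      constructor
      · rintro ⟨(rfl | rfl | rfl), h1⟩ <;> simp_all
      · rintro rfl; simp
    have hty : Finset.filter (fun p => p.2 = y) ({(x,y),(y,z),(z,x)} : Finset (V × V)) = {(x,y)} := by
      ext p
      simp only [Finset.mem_filter, Finset.mem_insert, Finset.mem_singleton]
      constructor
      · rintro ⟨(rfl | rfl | rfl), h1⟩ <;> simp_all
      · rintro rfl; simp
    have htz : Finset.filter (fun p => p.2 = z) ({(x,y),(y,z),(z,x)} : Finset (V × V)) = {(y,z)} := by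
      ext p
      simp only [Finset.mem_filter, Finset.mem_insert, Finset.mem_singleton]
      constructor
      · rintro ⟨(rfl | rfl | rfl), h1⟩ <;> simp_all
      · rintro rfl; simp
    rcases Finset.mem_insert.mp hu with rfl | hu
    · rw [hsx, htx]; simp
    rcases Finset.mem_insert.mp hu with rfl | hu
    · rw [hsy, hty]; simp
    · rw [Finset.mem_singleton] at hu; subst hu
      rw [hsz, htz]; simp

lemma cyc_classify {x y z : V} (hxy : x ≠ y) (hxz : x ≠ z) (hyz : y ≠ z)
    {d : Finset (V × V)} (hd : IsCyclicOrientation ({x, y, z} : Finset V) d) :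
    d = ({(x,y),(y,z),(z,x)} : Finset (V × V)) ∨ d = ({(x,z),(z,y),(y,x)} : Finset (V × V)) := by
  obtain ⟨hcard, hmem, hdeg⟩ := hd
  have hx : x ∈ ({x,y,z} : Finset V) := by simp
  have hy : y ∈ ({x,y,z} : Finset V) := by simp
  have hz : z ∈ ({x,y,z} : Finset V) := by simp
  obtain ⟨px, hpx⟩ := Finset.card_eq_one.mp (hdeg x hx).1
  obtain ⟨py, hpy⟩ := Finset.card_eq_one.mp (hdeg y hy).1
  obtain ⟨pz, hpz⟩ := Finset.card_eq_one.mp (hdeg z hz).1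
  have hpxm : px ∈ d ∧ px.1 = x := by
    have := hpx ▸ Finset.mem_singleton_self px; exact Finset.mem_filter.mp this
  have hpym : py ∈ d ∧ py.1 = y := by
    have := hpy ▸ Finset.mem_singleton_self py; exact Finset.mem_filter.mp this
  have hpzm : pz ∈ d ∧ pz.1 = z := by
    have := hpz ▸ Finset.mem_singleton_self pz; exact Finset.mem_filter.mp this
  obtain ⟨p2, hp2def⟩ : ∃ w, px.2 = w := ⟨_, rfl⟩
  obtain ⟨q2, hq2def⟩ : ∃ w, py.2 = w := ⟨_, rfl⟩
  obtain ⟨r2, hr2def⟩ : ∃ w, pz.2 = w := ⟨_, rfl⟩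
  have hpd : (x, p2) ∈ d := by
    have hpair : px = (x, p2) := by rw [← hpxm.2, ← hp2def]
    rw [← hpair]; exact hpxm.1
  have hqd : (y, q2) ∈ d := by
    have hpair : py = (y, q2) := by rw [← hpym.2, ← hq2def]
    rw [← hpair]; exact hpym.1
  have hrd : (z, r2) ∈ d := by
    have hpair : pz = (z, r2) := by rw [← hpzm.2, ← hr2def]
    rw [← hpair]; exact hpzm.1
  have hdeq : d = ({(x,p2),(y,q2),(z,r2)} : Finset (V × V)) := by
    refine (Finset.eq_of_subset_of_card_le ?_ ?_).symm
    · intro p hp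
      rcases Finset.mem_insert.mp hp with rfl | hp
      · exact hpd
      rcases Finset.mem_insert.mp hp with rfl | hp
      · exact hqd
      · rw [Finset.mem_singleton] at hp; subst hp; exact hrd
    · rw [hcard,
        Finset.card_insert_of_notMem (by simp [Prod.ext_iff, hxy, hxz]),
        Finset.card_insert_of_notMem (by simp [Prod.ext_iff, hyz]), Finset.card_singleton]
  have h2x : (Finset.filter (fun p => p.2 = x) d).card = 1 := (hdeg x hx).2
  have h2y : (Finset.filter (fun p => p.2 = y) d).card = 1 := (hdeg y hy).2
  have h2z : (Finset.filter (fun p => p.2 = z) d).card = 1 := (hdeg z hz).2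
  have hp2 : p2 = y ∨ p2 = z := by
    have h0 := hmem (x, p2) hpd
    have h2 : p2 ∈ ({x,y,z} : Finset V) := h0.2.1
    have hne : x ≠ p2 := h0.2.2
    simp only [Finset.mem_insert, Finset.mem_singleton] at h2
    rcases h2 with h2 | h2 | h2
    · exact absurd h2.symm hne
    · exact Or.inl h2
    · exact Or.inr h2
  have hq2 : q2 = x ∨ q2 = z := by
    have h0 := hmem (y, q2) hqd
    have h2 : q2 ∈ ({x,y,z} : Finset V) := h0.2.1
    have hne : y ≠ q2 := h0.2.2
    simp only [Finset.mem_insert, Finset.mem_singleton] at h2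
    rcases h2 with h2 | h2 | h2
    · exact Or.inl h2
    · exact absurd h2.symm hne
    · exact Or.inr h2
  have hr2 : r2 = x ∨ r2 = y := by
    have h0 := hmem (z, r2) hrd
    have h2 : r2 ∈ ({x,y,z} : Finset V) := h0.2.1
    have hne : z ≠ r2 := h0.2.2
    simp only [Finset.mem_insert, Finset.mem_singleton] at h2
    rcases h2 with h2 | h2 | h2
    · exact Or.inl h2
    · exact Or.inr h2
    · exact absurd h2.symm hne
  have htgt : ∀ w : V, w ∈ ({x,y,z} : Finset V) → ∀ p q : V × V, p ∈ d → q ∈ d → p ≠ q →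
      p.2 = w → q.2 = w → False := by
    intro w hw p q hpd' hqd' hpq hp hq
    have hsub : ({p, q} : Finset (V × V)) ⊆ Finset.filter (fun r => r.2 = w) d := by
      intro r hr
      rcases Finset.mem_insert.mp hr with rfl | hr
      · exact Finset.mem_filter.mpr ⟨hpd', hp⟩
      · rw [Finset.mem_singleton] at hr; subst hr
        exact Finset.mem_filter.mpr ⟨hqd', hq⟩
    have hle := Finset.card_le_card hsub
    rw [Finset.card_pair hpq] at hle
    have h1 : (Finset.filter (fun r => r.2 = w) d).card = 1 := by
      simp only [Finset.mem_insert, Finset.mem_singleton] at hw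
      rcases hw with rfl | rfl | rfl
      · exact h2x
      · exact h2y
      · exact h2z
    omega
  rcases hp2.imp Eq.symm Eq.symm with rfl | rfl
  · -- p2 = y : hpd : (x, y) ∈ d
    have hq2' : q2 = z := by
      rcases hq2 with heq | heq
      · exfalso
        rw [heq] at hqd
        rcases hr2 with heq' | heq'
        · rw [heq'] at hrd
          exact htgt x hx (y,x) (z,x) hqd hrd (by simp [Prod.ext_iff, hyz]) rfl rfl
        · rw [heq'] at hrd
          exact htgt y hy (x,y) (z,y) hpd hrd (by simp [Prod.ext_iff, hxz]) rfl rfl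
      · exact heq
    have hr2' : r2 = x := by
      rcases hr2 with heq | heq
      · exact heq
      · exfalso
        rw [heq] at hrd
        exact htgt y hy (x,y) (z,y) hpd hrd (by simp [Prod.ext_iff, hxz]) rfl rfl
    obtain rfl := hq2'.symm
    obtain rfl := hr2'.symm
    left; exact hdeq
  · -- p2 = z : hpd : (x, z) ∈ d
    have hq2' : q2 = x := by
      rcases hq2 with heq | heq
      · exact heq
      · exfalso
        rw [heq] at hqd
        exact htgt z hz (x,z) (y,z) hpd hqd (by simp [Prod.ext_iff, hxy]) rfl rfl
    have hr2' : r2 = y := by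
      rcases hr2 with heq | heq
      · exfalso
        rw [heq] at hrd
        rw [hq2'] at hqd
        exact htgt x hx (y,x) (z,x) hqd hrd (by simp [Prod.ext_iff, hyz]) rfl rfl
      · exact heq
    obtain rfl := hq2'.symm
    obtain rfl := hr2'.symm
    right
    rw [hdeq]
    ext p
    simp only [Finset.mem_insert, Finset.mem_singleton]
    tauto

end Helpers

lemma ne_of_mem_notMem' {α : Type*} {s t : Finset α} {x : α} (hx : x ∈ s) (hx' : x ∉ t) :
    s ≠ t := fun h => hx' (h ▸ hx)

lemma face_structure [DecidableEq V] {faces : Finset (Finset V)} (ht : IsTriangulation faces)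
    {F : Finset V} (hF : F ∈ faces) {v : V} (hv : v ∈ F) :
    ∃ a b : V, a ≠ b ∧ v ≠ a ∧ v ≠ b ∧ F = {v, a, b} := by
  have h3 := ht.card_three F hF
  obtain ⟨x, y, z, hxy, hxz, hyz, rfl⟩ := Finset.card_eq_three.mp h3
  rcases Finset.mem_insert.mp hv with rfl | hv
  · exact ⟨y, z, hyz, hxy, hxz, rfl⟩
  rcases Finset.mem_insert.mp hv with rfl | hv
  · exact ⟨x, z, hxz, hxy.symm, hyz, by rw [Finset.insert_comm]⟩
  · rw [Finset.mem_singleton] at hv; subst hv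
    refine ⟨x, y, hxy, hxz.symm, hyz.symm, ?_⟩
    ext w; simp only [Finset.mem_insert, Finset.mem_singleton]; tauto
/-- in an irreducible triangulation of a closed surface other than the
sphere every vertex has degree at least 4. -/
theorem stmt10 [DecidableEq V] (faces : Finset (Finset V)) (h : IrreducibleTri faces)
    (hsphere : eulerChar faces ≠ 2) :
    ∀ v ∈ vertexSet faces, 4 ≤ degree faces v := by
  obtain ⟨ht, hirr⟩ := h
  intro v hv
  by_contra hdeg4
  push_neg at hdeg4
  obtain ⟨F, hF, hvF⟩ := mem_vertexSet_iff.mp hv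
  obtain ⟨a, b, hab, hva, hvb, hFeq⟩ := face_structure ht hF hvF
  have haF : a ∈ F := by rw [hFeq]; simp
  have hbF : b ∈ F := by rw [hFeq]; simp
  -- second face on {v, a}
  have hvasub : ({v, a} : Finset V) ⊆ F := by
    intro z hz; simp at hz; rcases hz with rfl | rfl
    · exact hvF
    · exact haF
  have hva2 : ({v, a} : Finset V).card = 2 := Finset.card_pair hva
  obtain ⟨F', hF', hF'F, hvaF'⟩ := exists_second_face ht hva2 hF hvasub
  have hcex : ∃ c, c ∈ F' \ ({v, a} : Finset V) := by
    have hc : (F' \ ({v, a} : Finset V)).card = 1 := by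
      rw [Finset.card_sdiff_of_subset hvaF', ht.card_three F' hF', hva2]
    obtain ⟨c, hc⟩ := Finset.card_eq_one.mp hc
    exact ⟨c, by rw [hc]; simp⟩
  obtain ⟨c, hc⟩ := hcex
  obtain ⟨hcF', hcva⟩ := Finset.mem_sdiff.mp hc
  have hvc : v ≠ c := fun h => hcva (by simp [h.symm])
  have hac : a ≠ c := fun h => hcva (by simp [h.symm])
  have hF'eq : F' = ({v, a, c} : Finset V) := by
    refine (Finset.eq_of_subset_of_card_le ?_ ?_).symm
    · intro z hz
      rcases Finset.mem_insert.mp hz with rfl | hz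
      · exact hvaF' (by simp)
      rcases Finset.mem_insert.mp hz with rfl | hz
      · exact hvaF' (by simp)
      · rw [Finset.mem_singleton] at hz; subst hz; exact hcF'
    · rw [ht.card_three F' hF',
        Finset.card_insert_of_notMem (by simp; exact ⟨hva, hvc⟩),
        Finset.card_insert_of_notMem (by simp; exact hac),
        Finset.card_singleton]
  have hbc : b ≠ c := fun h => hF'F (by rw [hF'eq, ← h, ← hFeq])
  have hcF'' : c ∈ F' := hcF'
  -- the three edges at v
  have hEva : ({v, a} : Finset V) ∈ edgeSet faces := pair_mem_edgeSet hF hva hvF haF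
  have hEvb : ({v, b} : Finset V) ∈ edgeSet faces := pair_mem_edgeSet hF hvb hvF hbF
  have hEvc : ({v, c} : Finset V) ∈ edgeSet faces :=
    pair_mem_edgeSet hF' hvc (hvaF' (by simp)) hcF'
  have hfil : (edgeSet faces).filter (fun e => v ∈ e) =
      {({v, a} : Finset V), {v, b}, {v, c}} := by
    refine (Finset.eq_of_subset_of_card_le ?_ ?_).symm
    · intro e he
      rcases Finset.mem_insert.mp he with rfl | he
      · exact Finset.mem_filter.mpr ⟨hEva, by simp⟩
      rcases Finset.mem_insert.mp he with rfl | he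
      · exact Finset.mem_filter.mpr ⟨hEvb, by simp⟩
      · rw [Finset.mem_singleton] at he; subst he
        exact Finset.mem_filter.mpr ⟨hEvc, by simp⟩
    · have h3 : ({({v, a} : Finset V), {v, b}, {v, c}} : Finset (Finset V)).card = 3 := by
        rw [Finset.card_insert_of_notMem ?h1, Finset.card_insert_of_notMem ?h2,
          Finset.card_singleton]
        case h1 =>
          simp only [Finset.mem_insert, Finset.mem_singleton]
          push_neg
          exact ⟨ne_of_mem_notMem' (by simp : a ∈ ({v,a}:Finset V))
              (by simp; exact ⟨hva.symm, hab⟩),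
            ne_of_mem_notMem' (by simp : a ∈ ({v,a}:Finset V))
              (by simp; exact ⟨hva.symm, hac⟩)⟩
        case h2 =>
          simp only [Finset.mem_singleton]
          exact ne_of_mem_notMem' (by simp : b ∈ ({v,b}:Finset V))
            (by simp; exact ⟨hvb.symm, hbc⟩)
      rw [h3]
      have : degree faces v < 4 := hdeg4
      unfold degree at this
      omega
  have pair_elim : ∀ x w : V, v ≠ x → ({v, x} : Finset V) = {v, w} → x = w := by
    intro x w hvx heq
    have hx : x ∈ ({v, w} : Finset V) := heq ▸ (by simp)
    rcases Finset.mem_insert.mp hx with rfl | hx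
    · exact absurd rfl hvx
    · simpa using hx
  -- classification of faces at v
  have hfv : ∀ G ∈ faces, v ∈ G →
      G = ({v,a,b} : Finset V) ∨ G = ({v,a,c} : Finset V) ∨ G = ({v,b,c} : Finset V) := by
    intro G hG hvG
    obtain ⟨x, y, hxy, hvx, hvy, hGeq⟩ := face_structure ht hG hvG
    have hxG : x ∈ G := by rw [hGeq]; simp
    have hyG : y ∈ G := by rw [hGeq]; simp
    have hmemx : ({v, x} : Finset V) ∈ ({({v, a} : Finset V), {v, b}, {v, c}} : Finset (Finset V)) := by
      rw [← hfil]
      exact Finset.mem_filter.mpr ⟨pair_mem_edgeSet hG hvx hvG hxG, by simp⟩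
    have hmemy : ({v, y} : Finset V) ∈ ({({v, a} : Finset V), {v, b}, {v, c}} : Finset (Finset V)) := by
      rw [← hfil]
      exact Finset.mem_filter.mpr ⟨pair_mem_edgeSet hG hvy hvG hyG, by simp⟩
    have hx' : x = a ∨ x = b ∨ x = c := by
      rcases Finset.mem_insert.mp hmemx with heq | hmx
      · exact Or.inl (pair_elim x a hvx heq)
      rcases Finset.mem_insert.mp hmx with heq | hmx
      · exact Or.inr (Or.inl (pair_elim x b hvx heq))
      · rw [Finset.mem_singleton] at hmx
        exact Or.inr (Or.inr (pair_elim x c hvx hmx))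
    have hy' : y = a ∨ y = b ∨ y = c := by
      rcases Finset.mem_insert.mp hmemy with heq | hmy
      · exact Or.inl (pair_elim y a hvy heq)
      rcases Finset.mem_insert.mp hmy with heq | hmy
      · exact Or.inr (Or.inl (pair_elim y b hvy heq))
      · rw [Finset.mem_singleton] at hmy
        exact Or.inr (Or.inr (pair_elim y c hvy hmy))
    rcases hx'.imp Eq.symm (Or.imp Eq.symm Eq.symm) with rfl | rfl | rfl <;>
      rcases hy'.imp Eq.symm (Or.imp Eq.symm Eq.symm) with rfl | rfl | rfl
    · exact absurd rfl hxy
    · exact Or.inl hGeq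
    · exact Or.inr (Or.inl hGeq)
    · left; rw [hGeq, Finset.pair_comm b a]
    · exact absurd rfl hxy
    · exact Or.inr (Or.inr hGeq)
    · right; left; rw [hGeq, Finset.pair_comm c a]
    · right; right; rw [hGeq, Finset.pair_comm c b]
    · exact absurd rfl hxy
  have hvab : ({v,a,b} : Finset V) ∈ faces := hFeq ▸ hF
  have hvac : ({v,a,c} : Finset V) ∈ faces := hF'eq ▸ hF'
  -- the third face at v
  have hvbsub : ({v, b} : Finset V) ⊆ F := by
    intro z hz; simp at hz; rcases hz with rfl | rfl
    · exact hvF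
    · exact hbF
  obtain ⟨F'', hF''f, hF''ne, hsub''⟩ := exists_second_face ht (Finset.card_pair hvb) hF hvbsub
  have hvbc : ({v,b,c} : Finset V) ∈ faces := by
    have hvF'' : v ∈ F'' := hsub'' (by simp)
    have hbF'' : b ∈ F'' := hsub'' (by simp)
    rcases hfv F'' hF''f hvF'' with h1 | h1 | h1
    · exact absurd (h1.trans hFeq.symm) hF''ne
    · exfalso
      rw [h1] at hbF''
      simp at hbF''
      rcases hbF'' with rfl | rfl | rfl
      · exact hvb rfl
      · exact hab rfl
      · exact hbc rfl
    · rw [← h1]; exact hF''f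
  -- the ambient 4-set
  obtain ⟨T, hT⟩ : ∃ T : Finset V, T = {v, a, b, c} := ⟨_, rfl⟩
  have hcardT : T.card = 4 := by
    rw [hT, Finset.card_insert_of_notMem (by simp; exact ⟨hva, hvb, hvc⟩),
      Finset.card_insert_of_notMem (by simp; exact ⟨hab, hac⟩),
      Finset.card_insert_of_notMem (by simp; exact hbc), Finset.card_singleton]
  have hcard_vab : ({v,a,b} : Finset V).card = 3 := by
    rw [Finset.card_insert_of_notMem (by simp; exact ⟨hva, hvb⟩),
      Finset.card_insert_of_notMem (by simp; exact hab), Finset.card_singleton]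
  have hcard_vac : ({v,a,c} : Finset V).card = 3 := by
    rw [Finset.card_insert_of_notMem (by simp; exact ⟨hva, hvc⟩),
      Finset.card_insert_of_notMem (by simp; exact hac), Finset.card_singleton]
  have hcard_vbc : ({v,b,c} : Finset V).card = 3 := by
    rw [Finset.card_insert_of_notMem (by simp; exact ⟨hvb, hvc⟩),
      Finset.card_insert_of_notMem (by simp; exact hbc), Finset.card_singleton]
  have hcard_abc : ({a,b,c} : Finset V).card = 3 := by
    rw [Finset.card_insert_of_notMem (by simp; exact ⟨hab, hac⟩),
      Finset.card_insert_of_notMem (by simp; exact hbc), Finset.card_singleton]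
  have sub3 : ∀ X : Finset V, X ⊆ T → X.card = 3 →
      X = ({v,a,b} : Finset V) ∨ X = ({v,a,c} : Finset V) ∨ X = ({v,b,c} : Finset V) ∨
      X = ({a,b,c} : Finset V) := by
    intro X hXT hX3
    have hmiss : ∃ u ∈ T, u ∉ X := by
      by_contra hcon
      push_neg at hcon
      have := Finset.card_le_card hcon
      omega
    obtain ⟨u, huT, huX⟩ := hmiss
    rw [hT] at huT
    have hsub : ∀ w : V, (w ∈ T → w ≠ u → True) := fun _ _ _ => trivial
    rcases Finset.mem_insert.mp huT with rfl | huT'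
    · right; right; right
      refine Finset.eq_of_subset_of_card_le ?_ (by omega)
      intro w hw
      have hwT := hXT hw
      rw [hT] at hwT
      rcases Finset.mem_insert.mp hwT with rfl | hwT'
      · exact absurd hw huX
      · exact hwT'
    rcases Finset.mem_insert.mp huT' with rfl | huT''
    · right; right; left
      refine Finset.eq_of_subset_of_card_le ?_ (by rw [hcard_vbc]; omega)
      intro w hw
      have hwT := hXT hw
      rw [hT] at hwT
      rcases Finset.mem_insert.mp hwT with rfl | hwT'
      · simp
      rcases Finset.mem_insert.mp hwT' with rfl | hwT''
      · exact absurd hw huX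
      · simp at hwT'' ⊢; tauto
    rcases Finset.mem_insert.mp huT'' with rfl | huT'''
    · right; left
      refine Finset.eq_of_subset_of_card_le ?_ (by rw [hcard_vac]; omega)
      intro w hw
      have hwT := hXT hw
      rw [hT] at hwT
      rcases Finset.mem_insert.mp hwT with rfl | hwT'
      · simp
      rcases Finset.mem_insert.mp hwT' with rfl | hwT''
      · simp
      rcases Finset.mem_insert.mp hwT'' with rfl | hwT'''
      · exact absurd hw huX
      · simp at hwT''' ⊢; tauto
    · rw [Finset.mem_singleton] at huT'''; subst huT'''
      left
      refine Finset.eq_of_subset_of_card_le ?_ (by rw [hcard_vab]; omega)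
      intro w hw
      have hwT := hXT hw
      rw [hT] at hwT
      rcases Finset.mem_insert.mp hwT with rfl | hwT'
      · simp
      rcases Finset.mem_insert.mp hwT' with rfl | hwT''
      · simp
      rcases Finset.mem_insert.mp hwT'' with rfl | hwT'''
      · simp
      · rw [Finset.mem_singleton] at hwT'''; subst hwT'''
        exact absurd hw huX
  by_cases habc : ({a,b,c} : Finset V) ∈ faces
  · -- Case A : tetrahedron, Euler characteristic 2
    obtain ⟨S, hS⟩ : ∃ S : Finset (Finset V),
        S = {({v,a,b} : Finset V), ({v,a,c} : Finset V), ({v,b,c} : Finset V),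
          ({a,b,c} : Finset V)} := ⟨_, rfl⟩
    have hSfaces : ∀ X ∈ S, X ∈ faces := by
      intro X hX
      rw [hS] at hX
      rcases Finset.mem_insert.mp hX with rfl | hX
      · exact hvab
      rcases Finset.mem_insert.mp hX with rfl | hX
      · exact hvac
      rcases Finset.mem_insert.mp hX with rfl | hX
      · exact hvbc
      · rw [Finset.mem_singleton] at hX; subst hX; exact habc
    have hsubT : ∀ X ∈ S, X ⊆ T := by
      intro X hX w hw
      have hX' : X = ({v,a,b}:Finset V) ∨ X = ({v,a,c}:Finset V) ∨ X = ({v,b,c}:Finset V) ∨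
          X = ({a,b,c}:Finset V) := by
        rw [hS] at hX; simpa using hX
      clear hX
      rw [hT]
      simp only [Finset.mem_insert, Finset.mem_singleton]
      rcases hX' with rfl | rfl | rfl | rfl <;>
        simp only [Finset.mem_insert, Finset.mem_singleton] at hw <;>
        rcases hw with rfl | rfl | rfl <;> simp
    have htwo : ∀ e : Finset V, e ⊆ T → e.card = 2 →
        ∃ F1 ∈ S, ∃ F2 ∈ S, F1 ≠ F2 ∧ e ⊆ F1 ∧ e ⊆ F2 := by
      intro e heT he2
      have hcd : (T \ e).card = 2 := by rw [Finset.card_sdiff_of_subset heT, hcardT, he2]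
      obtain ⟨u1, u2, hu12, hTe⟩ := Finset.card_eq_two.mp hcd
      have hu1 : u1 ∈ T \ e := by rw [hTe]; simp
      have hu2 : u2 ∈ T \ e := by rw [hTe]; simp
      obtain ⟨hu1T, hu1e⟩ := Finset.mem_sdiff.mp hu1
      obtain ⟨hu2T, hu2e⟩ := Finset.mem_sdiff.mp hu2
      have hF1c : (insert u1 e).card = 3 := by rw [Finset.card_insert_of_notMem hu1e, he2]
      have hF2c : (insert u2 e).card = 3 := by rw [Finset.card_insert_of_notMem hu2e, he2]
      have hF1T : insert u1 e ⊆ T := Finset.insert_subset hu1T heT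
      have hF2T : insert u2 e ⊆ T := Finset.insert_subset hu2T heT
      have hF1S : insert u1 e ∈ S := by
        rcases sub3 _ hF1T hF1c with h1 | h1 | h1 | h1 <;> rw [h1, hS] <;> simp
      have hF2S : insert u2 e ∈ S := by
        rcases sub3 _ hF2T hF2c with h1 | h1 | h1 | h1 <;> rw [h1, hS] <;> simp
      refine ⟨_, hF1S, _, hF2S, ?_, Finset.subset_insert _ _, Finset.subset_insert _ _⟩
      intro hcon
      have hmem2 : u2 ∈ insert u1 e := by rw [hcon]; simp
      rcases Finset.mem_insert.mp hmem2 with h1 | h1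
      · exact hu12.symm h1
      · exact hu2e h1
    have hclosed : ∀ A ∈ S, ∀ B ∈ faces, (A ∩ B).card = 2 → B ∈ S := by
      intro A hA B hB hcard2
      have heT : A ∩ B ⊆ T := (Finset.inter_subset_left).trans (hsubT A hA)
      obtain ⟨F1, hF1S, F2, hF2S, hne, he1, he2⟩ := htwo (A ∩ B) heT hcard2
      rcases face_eq_of_subset ht hcard2 (hSfaces F1 hF1S) (hSfaces F2 hF2S) hne he1 he2 hB
        Finset.inter_subset_right with rfl | rfl
      · exact hF1S
      · exact hF2S
    have hfacesS : faces = S := by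
      refine Finset.Subset.antisymm ?_ (fun X hX => hSfaces X hX)
      intro G hG
      have hpath := ht.connected {v,a,b} hvab G hG
      clear hG
      induction hpath with
      | refl => rw [hS]; simp
      | tail hAB hstep ih =>
        obtain ⟨hmf, hgf, hcard2⟩ := hstep
        exact hclosed _ ih _ hgf hcard2
    have hVT : vertexSet faces = T := by
      ext x
      rw [mem_vertexSet_iff]
      constructor
      · rintro ⟨X, hX, hxX⟩
        rw [hfacesS] at hX
        exact hsubT X hX hxX
      · intro hx
        simp only [hT, Finset.mem_insert, Finset.mem_singleton] at hx
        rcases hx with rfl | rfl | rfl | rfl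
        · exact ⟨_, hvab, by simp⟩
        · exact ⟨_, hvab, by simp⟩
        · exact ⟨_, hvab, by simp⟩
        · exact ⟨_, hvac, by simp⟩
    have hET : edgeSet faces = T.powersetCard 2 := by
      unfold edgeSet
      rw [hVT]
      apply Finset.filter_true_of_mem
      intro e he
      obtain ⟨heT, he2⟩ := Finset.mem_powersetCard.mp he
      obtain ⟨F1, hF1S, _, _, _, he1, _⟩ := htwo e heT he2
      exact ⟨F1, hSfaces F1 hF1S, he1⟩
    have hcardE : (edgeSet faces).card = 6 := by
      rw [hET, Finset.card_powersetCard, hcardT]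
      rfl
    have hcardF : faces.card = 4 := by
      rw [hfacesS, hS]
      rw [Finset.card_insert_of_notMem ?n1, Finset.card_insert_of_notMem ?n2,
        Finset.card_insert_of_notMem ?n3, Finset.card_singleton]
      case n1 =>
        simp only [Finset.mem_insert, Finset.mem_singleton]
        push_neg
        refine ⟨?_, ?_, ?_⟩
        · exact ne_of_mem_notMem' (show b ∈ ({v,a,b}:Finset V) by simp)
            (by simp; exact ⟨hvb.symm, hab.symm, hbc⟩)
        · exact ne_of_mem_notMem' (show a ∈ ({v,a,b}:Finset V) by simp)
            (by simp; exact ⟨hva.symm, hab, hac⟩)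
        · exact ne_of_mem_notMem' (show v ∈ ({v,a,b}:Finset V) by simp)
            (by simp; exact ⟨hva, hvb, hvc⟩)
      case n2 =>
        simp only [Finset.mem_insert, Finset.mem_singleton]
        push_neg
        constructor
        · exact ne_of_mem_notMem' (show a ∈ ({v,a,c}:Finset V) by simp)
            (by simp; exact ⟨hva.symm, hab, hac⟩)
        · exact ne_of_mem_notMem' (show v ∈ ({v,a,c}:Finset V) by simp)
            (by simp; exact ⟨hva, hvb, hvc⟩)
      case n3 =>
        simp only [Finset.mem_singleton]
        exact ne_of_mem_notMem' (show v ∈ ({v,b,c}:Finset V) by simp)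
          (by simp; exact ⟨hva, hvb, hvc⟩)
    apply hsphere
    unfold eulerChar
    rw [hVT, hcardT, hcardE, hcardF]
    norm_num
  · -- Case B : the edge {a, v} is contractible
    have hvabc : v ∉ ({a,b,c} : Finset V) := by
      simp only [Finset.mem_insert, Finset.mem_singleton]
      push_neg
      exact ⟨hva, hvb, hvc⟩
    obtain ⟨K, hKdef⟩ : ∃ K, K = contract faces a v := ⟨_, rfl⟩
    have himg_fix : ∀ G : Finset V, v ∉ G →
        G.image (fun x => if x = v then a else x) = G := by
      intro G hvG
      ext x
      simp only [Finset.mem_image]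
      constructor
      · rintro ⟨y, hy, rfl⟩
        rw [if_neg (ne_of_mem_of_not_mem hy hvG)]
        exact hy
      · intro hx
        exact ⟨x, hx, if_neg (ne_of_mem_of_not_mem hx hvG)⟩
    have himg_vbc : ({v,b,c} : Finset V).image (fun x => if x = v then a else x)
        = ({a,b,c} : Finset V) := by
      rw [Finset.image_insert, Finset.image_insert, Finset.image_singleton,
        if_pos rfl, if_neg hvb.symm, if_neg hvc.symm]
    have hKmem : ∀ G : Finset V, G ∈ K ↔
        (G = ({a,b,c} : Finset V) ∨ (G ∈ faces ∧ v ∉ G)) := by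
      intro G
      rw [hKdef]
      unfold contract
      rw [Finset.mem_image]
      constructor
      · rintro ⟨F0, hF0, rfl⟩
        rw [Finset.mem_filter] at hF0
        obtain ⟨hF0f, hF0av⟩ := hF0
        by_cases hvF0 : v ∈ F0
        · left
          have hF0eq : F0 = ({v,b,c} : Finset V) := by
            rcases hfv F0 hF0f hvF0 with h1 | h1 | h1
            · exact absurd ⟨by rw [h1]; simp, hvF0⟩ hF0av
            · exact absurd ⟨by rw [h1]; simp, hvF0⟩ hF0av
            · exact h1
          rw [hF0eq, himg_vbc]
        · right
          rw [himg_fix F0 hvF0]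
          exact ⟨hF0f, hvF0⟩
      · rintro (rfl | ⟨hGf, hvG⟩)
        · refine ⟨{v,b,c}, Finset.mem_filter.mpr ⟨hvbc, ?_⟩, himg_vbc⟩
          rintro ⟨haF0, -⟩
          simp only [Finset.mem_insert, Finset.mem_singleton] at haF0
          rcases haF0 with h1 | h1 | h1
          exacts [hva h1.symm, hab h1, hac h1]
        · refine ⟨G, Finset.mem_filter.mpr ⟨hGf, ?_⟩, himg_fix G hvG⟩
          rintro ⟨-, hvG'⟩
          exact hvG hvG'
    have habcK : ({a,b,c} : Finset V) ∈ K := (hKmem _).mpr (Or.inl rfl)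
    have hvK : ∀ G ∈ K, v ∉ G := by
      intro G hG
      rcases (hKmem G).mp hG with rfl | ⟨_, hvG⟩
      · exact hvabc
      · exact hvG
    have hKinsert : K = insert ({a,b,c} : Finset V) (faces.filter fun F => v ∉ F) := by
      ext G
      rw [hKmem G]
      simp [Finset.mem_filter]
    have hfv3 : faces.filter (fun F => v ∈ F) =
        {({v,a,b} : Finset V), ({v,a,c} : Finset V), ({v,b,c} : Finset V)} := by
      ext G
      simp only [Finset.mem_filter, Finset.mem_insert, Finset.mem_singleton]
      constructor
      · rintro ⟨hGf, hvG⟩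
        exact hfv G hGf hvG
      · rintro (rfl | rfl | rfl)
        exacts [⟨hvab, by simp⟩, ⟨hvac, by simp⟩, ⟨hvbc, by simp⟩]
    have hcard3faces : ({({v,a,b} : Finset V), ({v,a,c} : Finset V), ({v,b,c} : Finset V)} :
        Finset (Finset V)).card = 3 := by
      rw [Finset.card_insert_of_notMem ?m1, Finset.card_insert_of_notMem ?m2,
        Finset.card_singleton]
      case m1 =>
        simp only [Finset.mem_insert, Finset.mem_singleton]
        push_neg
        constructor
        · exact ne_of_mem_notMem' (show b ∈ ({v,a,b}:Finset V) by simp)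
            (by simp; exact ⟨hvb.symm, hab.symm, hbc⟩)
        · exact ne_of_mem_notMem' (show a ∈ ({v,a,b}:Finset V) by simp)
            (by simp; exact ⟨hva.symm, hab, hac⟩)
      case m2 =>
        simp only [Finset.mem_singleton]
        exact ne_of_mem_notMem' (show a ∈ ({v,a,c}:Finset V) by simp)
          (by simp; exact ⟨hva.symm, hab, hac⟩)
    have hcard3edges : ({({v,a} : Finset V), ({v,b} : Finset V), ({v,c} : Finset V)} :
        Finset (Finset V)).card = 3 := by
      rw [Finset.card_insert_of_notMem ?e1, Finset.card_insert_of_notMem ?e2,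
        Finset.card_singleton]
      case e1 =>
        simp only [Finset.mem_insert, Finset.mem_singleton]
        push_neg
        constructor
        · exact ne_of_mem_notMem' (show a ∈ ({v,a}:Finset V) by simp)
            (by simp; exact ⟨hva.symm, hab⟩)
        · exact ne_of_mem_notMem' (show a ∈ ({v,a}:Finset V) by simp)
            (by simp; exact ⟨hva.symm, hac⟩)
      case e2 =>
        simp only [Finset.mem_singleton]
        exact ne_of_mem_notMem' (show b ∈ ({v,b}:Finset V) by simp)
          (by simp; exact ⟨hvb.symm, hbc⟩)
    have hsubabc : ∀ H, H ∈ faces → v ∈ H → ∀ e' : Finset V, e' ⊆ H → v ∉ e' →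
        e' ⊆ ({a,b,c} : Finset V) := by
      intro H hHf hvH e' he'H hve' w hw
      have hwH := he'H hw
      have hwv : w ≠ v := fun h => hve' (h ▸ hw)
      rcases hfv H hHf hvH with h1 | h1 | h1 <;> rw [h1] at hwH <;>
        simp only [Finset.mem_insert, Finset.mem_singleton] at hwH ⊢ <;>
        rcases hwH with rfl | rfl | rfl <;> first | exact absurd rfl hwv | simp
    have hins : ∀ e : Finset V, e ⊆ ({a,b,c} : Finset V) → e.card = 2 →
        insert v e ∈ faces ∧ e ⊆ insert v e ∧ v ∉ e := by
      intro e heabc he2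
      have hve : v ∉ e := fun hv' => hvabc (heabc hv')
      have hc3 : (insert v e).card = 3 := by rw [Finset.card_insert_of_notMem hve, he2]
      have hsubT' : insert v e ⊆ T := by
        rw [hT]
        apply Finset.insert_subset (by simp)
        intro w hw
        have hw' := heabc hw
        simp only [Finset.mem_insert, Finset.mem_singleton] at hw' ⊢
        rcases hw' with rfl | rfl | rfl <;> simp
      have hvmem : v ∈ insert v e := Finset.mem_insert_self v e
      rcases sub3 _ hsubT' hc3 with h1 | h1 | h1 | h1
      · rw [h1]; exact ⟨hvab, h1 ▸ Finset.subset_insert v e, hve⟩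
      · rw [h1]; exact ⟨hvac, h1 ▸ Finset.subset_insert v e, hve⟩
      · rw [h1]; exact ⟨hvbc, h1 ▸ Finset.subset_insert v e, hve⟩
      · exfalso; rw [h1] at hvmem; exact hvabc hvmem
    have hinter : ∀ A B : Finset V, A ∈ faces → B ∈ faces → v ∈ A → v ∉ B →
        (A ∩ B).card = 2 →
        (({a,b,c} : Finset V) ∩ B).card = 2 ∧ A ∩ B ⊆ ({a,b,c} : Finset V) ∩ B := by
      intro A B hAf hBf hvA hvB hc2
      have hsub : A ∩ B ⊆ ({a,b,c} : Finset V) ∩ B := by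
        intro w hw
        obtain ⟨hwA, hwB⟩ := Finset.mem_inter.mp hw
        refine Finset.mem_inter.mpr ⟨?_, hwB⟩
        exact hsubabc A hAf hvA {w} (Finset.singleton_subset_iff.mpr hwA)
          (by simp; exact fun h => (ne_of_mem_of_not_mem hwB hvB) h.symm)
          (Finset.mem_singleton_self w)
      have hle : (({a,b,c} : Finset V) ∩ B).card ≤ 3 :=
        le_trans (Finset.card_le_card Finset.inter_subset_left) (le_of_eq hcard_abc)
      have hge : 2 ≤ (({a,b,c} : Finset V) ∩ B).card := hc2 ▸ Finset.card_le_card hsub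
      have hne3 : (({a,b,c} : Finset V) ∩ B).card ≠ 3 := by
        intro h3
        have h4 : ({a,b,c} : Finset V) ∩ B = {a,b,c} :=
          Finset.eq_of_subset_of_card_le Finset.inter_subset_left (by rw [h3, hcard_abc])
        have habcB : ({a,b,c} : Finset V) ⊆ B := by
          rw [← h4]; exact Finset.inter_subset_right
        have h5 : ({a,b,c} : Finset V) = B :=
          Finset.eq_of_subset_of_card_le habcB (by rw [ht.card_three B hBf, hcard_abc])
        rw [← h5] at hBf
        exact habc hBf
      exact ⟨by omega, hsub⟩
    obtain ⟨ψ, hψ⟩ : ∃ ψ : Finset V → Finset V,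
        ∀ H, ψ H = if v ∈ H then ({a,b,c} : Finset V) else H := ⟨_, fun _ => rfl⟩
    have hψabc : ∀ H, v ∈ H → ψ H = ({a,b,c} : Finset V) := fun H h => by
      rw [hψ H, if_pos h]
    have hψid : ∀ H, v ∉ H → ψ H = H := fun H h => by rw [hψ H, if_neg h]
    -- the contracted complex is a triangulation
    have hKtri : IsTriangulation K := by
      refine ⟨⟨_, habcK⟩, ?_, ?_, ?_, ?_⟩
      · -- card_three
        intro G hG
        rcases (hKmem G).mp hG with rfl | ⟨hGf, _⟩
        · exact hcard_abc
        · exact ht.card_three G hGf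
      · -- edge_two_faces
        rintro e he2 ⟨G0, hG0K, heG0⟩
        by_cases heabc : e ⊆ ({a,b,c} : Finset V)
        · obtain ⟨hFv, heFv, hve⟩ := hins e heabc he2
          obtain ⟨Ge, hGe, hGene, heGe⟩ := exists_second_face ht he2 hFv heFv
          have hvGe : v ∉ Ge := by
            intro hvGe
            apply hGene
            refine (Finset.eq_of_subset_of_card_le ?_ ?_).symm
            · exact Finset.insert_subset hvGe heGe
            · rw [ht.card_three Ge hGe, Finset.card_insert_of_notMem hve, he2]
          have hGeK : Ge ∈ K := (hKmem Ge).mpr (Or.inr ⟨hGe, hvGe⟩)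
          have hGeabc : Ge ≠ ({a,b,c} : Finset V) := fun h => habc (h ▸ hGe)
          have hfilK : K.filter (fun G => e ⊆ G) = {({a,b,c} : Finset V), Ge} := by
            ext H
            simp only [Finset.mem_filter, Finset.mem_insert, Finset.mem_singleton]
            constructor
            · rintro ⟨hHK, heH⟩
              rcases (hKmem H).mp hHK with rfl | ⟨hHf, hvH⟩
              · exact Or.inl rfl
              · right
                rcases face_eq_of_subset ht he2 hFv hGe hGene.symm heFv heGe hHf heH
                  with h1 | h1
                · exfalso; rw [h1] at hvH; exact hvH (Finset.mem_insert_self _ _)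
                · exact h1
            · rintro (rfl | rfl)
              · exact ⟨habcK, heabc⟩
              · exact ⟨hGeK, heGe⟩
          rw [hfilK, Finset.card_insert_of_notMem
            (by simp only [Finset.mem_singleton]; exact fun h => hGeabc h.symm),
            Finset.card_singleton]
        · have hG0' : G0 ∈ faces ∧ v ∉ G0 := by
            rcases (hKmem G0).mp hG0K with rfl | hg
            · exact absurd heG0 heabc
            · exact hg
          have hfeq : K.filter (fun G => e ⊆ G) = faces.filter (fun G => e ⊆ G) := by
            ext H
            simp only [Finset.mem_filter]
            constructor
            · rintro ⟨hHK, heH⟩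
              rcases (hKmem H).mp hHK with rfl | ⟨hHf, _⟩
              · exact absurd heH heabc
              · exact ⟨hHf, heH⟩
            · rintro ⟨hHf, heH⟩
              refine ⟨(hKmem H).mpr (Or.inr ⟨hHf, ?_⟩), heH⟩
              intro hvH
              apply heabc
              exact hsubabc H hHf hvH e heH (fun hc => hG0'.2 (heG0 hc))
          rw [hfeq]
          exact ht.edge_two_faces e he2 ⟨G0, hG0'.1, heG0⟩
      · -- link_connected
        intro u F1 hF1K G1 hG1K huF1 huG1
        have hrep : ∀ H ∈ K, u ∈ H → ∃ H0 ∈ faces, u ∈ H0 ∧ ψ H0 = H := by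
          intro H hHK huH
          rcases (hKmem H).mp hHK with rfl | ⟨hHf, hvH⟩
          · simp only [Finset.mem_insert, Finset.mem_singleton] at huH
            rcases huH with rfl | rfl | rfl
            · exact ⟨{v,u,b}, hvab, by simp, hψabc _ (by simp)⟩
            · exact ⟨{v,a,u}, hvab, by simp, hψabc _ (by simp)⟩
            · exact ⟨{v,a,u}, hvac, by simp, hψabc _ (by simp)⟩
          · exact ⟨H, hHf, huH, hψid H hvH⟩
        obtain ⟨F0, hF0f, huF0, hψF0⟩ := hrep F1 hF1K huF1
        obtain ⟨G0, hG0f, huG0, hψG0⟩ := hrep G1 hG1K huG1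
        have hpath := ht.link_connected u F0 hF0f G0 hG0f huF0 huG0
        rw [← hψF0, ← hψG0]
        clear hψF0 hψG0 huG0 hG0f huF0 hF0f hF1K hG1K huF1 huG1
        induction hpath with
        | refl => exact Relation.ReflTransGen.refl
        | @tail M B hAB hstep ih =>
          refine ih.trans ?_
          obtain ⟨hMf, hBf, huMB, hcMB⟩ := hstep
          obtain ⟨huM, huB⟩ := Finset.mem_inter.mp huMB
          by_cases hvM : v ∈ M <;> by_cases hvB : v ∈ B
          · rw [hψabc _ hvM, hψabc _ hvB]
          · rw [hψabc _ hvM, hψid _ hvB]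
            apply Relation.ReflTransGen.single
            obtain ⟨hc2, hsub⟩ := hinter M B hMf hBf hvM hvB hcMB
            exact ⟨habcK, (hKmem B).mpr (Or.inr ⟨hBf, hvB⟩), hsub huMB, hc2⟩
          · rw [hψabc _ hvB, hψid _ hvM]
            apply Relation.ReflTransGen.single
            rw [Finset.inter_comm] at hcMB huMB
            obtain ⟨hc2, hsub⟩ := hinter B M hBf hMf hvB hvM hcMB
            refine ⟨(hKmem M).mpr (Or.inr ⟨hMf, hvM⟩), habcK, ?_, ?_⟩
            · rw [Finset.inter_comm]; exact hsub huMB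
            · rw [Finset.inter_comm]; exact hc2
          · rw [hψid _ hvM, hψid _ hvB]
            exact Relation.ReflTransGen.single
              ⟨(hKmem M).mpr (Or.inr ⟨hMf, hvM⟩), (hKmem B).mpr (Or.inr ⟨hBf, hvB⟩),
                huMB, hcMB⟩
      · -- connected
        intro F1 hF1K G1 hG1K
        have hrep : ∀ H ∈ K, ∃ H0 ∈ faces, ψ H0 = H := by
          intro H hHK
          rcases (hKmem H).mp hHK with rfl | ⟨hHf, hvH⟩
          · exact ⟨{v,b,c}, hvbc, hψabc _ (by simp)⟩
          · exact ⟨H, hHf, hψid H hvH⟩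
        obtain ⟨F0, hF0f, hψF0⟩ := hrep F1 hF1K
        obtain ⟨G0, hG0f, hψG0⟩ := hrep G1 hG1K
        have hpath := ht.connected F0 hF0f G0 hG0f
        rw [← hψF0, ← hψG0]
        clear hψF0 hψG0 hG0f hF0f hF1K hG1K
        induction hpath with
        | refl => exact Relation.ReflTransGen.refl
        | @tail M B hAB hstep ih =>
          refine ih.trans ?_
          obtain ⟨hMf, hBf, hcMB⟩ := hstep
          by_cases hvM : v ∈ M <;> by_cases hvB : v ∈ B
          · rw [hψabc _ hvM, hψabc _ hvB]
          · rw [hψabc _ hvM, hψid _ hvB]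
            apply Relation.ReflTransGen.single
            obtain ⟨hc2, _⟩ := hinter M B hMf hBf hvM hvB hcMB
            exact ⟨habcK, (hKmem B).mpr (Or.inr ⟨hBf, hvB⟩), hc2⟩
          · rw [hψabc _ hvB, hψid _ hvM]
            apply Relation.ReflTransGen.single
            rw [Finset.inter_comm] at hcMB
            obtain ⟨hc2, _⟩ := hinter B M hBf hMf hvB hvM hcMB
            exact ⟨(hKmem M).mpr (Or.inr ⟨hMf, hvM⟩), habcK, by rw [Finset.inter_comm]; exact hc2⟩
          · rw [hψid _ hvM, hψid _ hvB]
            exact Relation.ReflTransGen.single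
              ⟨(hKmem M).mpr (Or.inr ⟨hMf, hvM⟩), (hKmem B).mpr (Or.inr ⟨hBf, hvB⟩), hcMB⟩
    -- vertex, edge, face counts
    have hVK : vertexSet K = (vertexSet faces).erase v := by
      ext x
      rw [mem_vertexSet_iff, Finset.mem_erase, mem_vertexSet_iff]
      constructor
      · rintro ⟨G, hGK, hxG⟩
        refine ⟨ne_of_mem_of_not_mem hxG (hvK G hGK), ?_⟩
        rcases (hKmem G).mp hGK with rfl | ⟨hGf, _⟩
        · simp only [Finset.mem_insert, Finset.mem_singleton] at hxG
          rcases hxG with rfl | rfl | rfl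
          · exact ⟨{v,x,b}, hvab, by simp⟩
          · exact ⟨{v,a,x}, hvab, by simp⟩
          · exact ⟨{v,a,x}, hvac, by simp⟩
        · exact ⟨G, hGf, hxG⟩
      · rintro ⟨hxv, G, hGf, hxG⟩
        by_cases hvG : v ∈ G
        · refine ⟨{a,b,c}, habcK, ?_⟩
          exact hsubabc G hGf hvG {x} (Finset.singleton_subset_iff.mpr hxG)
            (by simp only [Finset.mem_singleton]; exact fun h => hxv h.symm)
            (Finset.mem_singleton_self x)
        · exact ⟨G, (hKmem G).mpr (Or.inr ⟨hGf, hvG⟩), hxG⟩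
    have hEK : edgeSet K = (edgeSet faces).filter (fun e => v ∉ e) := by
      ext e
      unfold edgeSet
      simp only [Finset.mem_filter, Finset.mem_powersetCard]
      constructor
      · rintro ⟨⟨heV, he2⟩, G, hGK, heG⟩
        have hve : v ∉ e := by
          intro hc
          have h' := heV hc
          rw [hVK] at h'
          exact (Finset.mem_erase.mp h').1 rfl
        have hsubV : e ⊆ vertexSet faces := by
          intro w hw
          have h' := heV hw
          rw [hVK] at h'
          exact Finset.mem_of_mem_erase h'
        refine ⟨⟨⟨hsubV, he2⟩, ?_⟩, hve⟩
        rcases (hKmem G).mp hGK with rfl | ⟨hGf, _⟩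
        · obtain ⟨hFv, heFv, _⟩ := hins e heG he2
          exact ⟨insert v e, hFv, heFv⟩
        · exact ⟨G, hGf, heG⟩
      · rintro ⟨⟨⟨heV, he2⟩, G, hGf, heG⟩, hve⟩
        refine ⟨⟨?_, he2⟩, ?_⟩
        · intro w hw
          rw [hVK, Finset.mem_erase]
          exact ⟨ne_of_mem_of_not_mem hw hve, heV hw⟩
        · by_cases hvG : v ∈ G
          · exact ⟨{a,b,c}, habcK, hsubabc G hGf hvG e heG hve⟩
          · exact ⟨G, (hKmem G).mpr (Or.inr ⟨hGf, hvG⟩), heG⟩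
    have h3E : 3 ≤ (edgeSet faces).card := by
      rw [← hcard3edges, ← hfil]
      exact Finset.card_le_card (Finset.filter_subset _ _)
    have h3F : 3 ≤ faces.card := by
      rw [← hcard3faces, ← hfv3]
      exact Finset.card_le_card (Finset.filter_subset _ _)
    have hcardVK : (vertexSet K).card = (vertexSet faces).card - 1 := by
      rw [hVK, Finset.card_erase_of_mem hv]
    have hcardEK : (edgeSet K).card = (edgeSet faces).card - 3 := by
      rw [hEK, Finset.filter_not, Finset.card_sdiff_of_subset (Finset.filter_subset _ _), hfil,
        hcard3edges]
    have hcardK : K.card = faces.card - 2 := by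
      rw [hKinsert, Finset.card_insert_of_notMem
        (fun hmem => habc (Finset.mem_filter.mp hmem).1),
        Finset.filter_not, Finset.card_sdiff_of_subset (Finset.filter_subset _ _), hfv3, hcard3faces]
      omega
    have h1V : 1 ≤ (vertexSet faces).card := Finset.card_pos.mpr ⟨v, hv⟩
    have heuler : eulerChar K = eulerChar faces := by
      unfold eulerChar
      rw [hcardVK, hcardEK, hcardK,
        Nat.cast_sub h1V, Nat.cast_sub h3E, Nat.cast_sub (by omega : 2 ≤ faces.card)]
      push_cast
      ring
    have horient : Orientable K ↔ Orientable faces := by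
      constructor
      · -- K orientable → faces orientable
        rintro ⟨or', hcyc', hdisj'⟩
        obtain ⟨x, y, hxy, hxbc, horabc⟩ : ∃ x y : V, x ≠ y ∧ ({x,y} : Finset V) = {b,c} ∧
            or' ({a,b,c} : Finset V) = {(a,x),(x,y),(y,a)} := by
          rcases cyc_classify hab hac hbc (hcyc' _ habcK) with h | h
          exacts [⟨b, c, hbc, rfl, h⟩, ⟨c, b, hbc.symm, Finset.pair_comm c b, h⟩]
        have hxm : x = b ∨ x = c := by
          have hx' : x ∈ ({b,c} : Finset V) := by rw [← hxbc]; simp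
          simpa using hx'
        have hym : y = b ∨ y = c := by
          have hy' : y ∈ ({b,c} : Finset V) := by rw [← hxbc]; simp
          simpa using hy'
        have hvx : v ≠ x := by rcases hxm with h | h <;> rw [h] <;> assumption
        have hvy : v ≠ y := by rcases hym with h | h <;> rw [h] <;> assumption
        have hax : a ≠ x := by rcases hxm with h | h <;> rw [h] <;> assumption
        have hay : a ≠ y := by rcases hym with h | h <;> rw [h] <;> assumption
        have hcases : (x = b ∧ y = c) ∨ (x = c ∧ y = b) := by
          rcases hxm with h1 | h1 <;> rcases hym with h2 | h2
          · exact absurd (h1.trans h2.symm) hxy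
          · exact Or.inl ⟨h1, h2⟩
          · exact Or.inr ⟨h1, h2⟩
          · exact absurd (h1.trans h2.symm) hxy
        have hvax_f : ({v,a,x} : Finset V) ∈ faces := by
          rcases hxm with h | h <;> rw [h]
          exacts [hvab, hvac]
        have hvay_f : ({v,a,y} : Finset V) ∈ faces := by
          rcases hym with h | h <;> rw [h]
          exacts [hvab, hvac]
        have hvxy_eq : ({v,x,y} : Finset V) = ({v,b,c} : Finset V) := by rw [hxbc]
        have hvxy_f : ({v,x,y} : Finset V) ∈ faces := by rw [hvxy_eq]; exact hvbc
        have hfv' : ∀ G ∈ faces, v ∈ G →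
            G = ({v,a,x} : Finset V) ∨ G = ({v,a,y} : Finset V) ∨
            G = ({v,x,y} : Finset V) := by
          intro G hGf hvG
          rcases hfv G hGf hvG with h | h | h
          · rcases hcases with ⟨h1, h2⟩ | ⟨h1, h2⟩
            · left; rw [h, h1]
            · right; left; rw [h, h2]
          · rcases hcases with ⟨h1, h2⟩ | ⟨h1, h2⟩
            · right; left; rw [h, h2]
            · left; rw [h, h1]
          · right; right; rw [h, hvxy_eq]
        have hne1 : ({v,a,x} : Finset V) ≠ ({v,a,y} : Finset V) :=
          ne_of_mem_notMem' (show x ∈ ({v,a,x} : Finset V) by simp)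
            (by simp; exact ⟨hvx.symm, hax.symm, hxy⟩)
        have hne2 : ({v,a,x} : Finset V) ≠ ({v,x,y} : Finset V) :=
          ne_of_mem_notMem' (show a ∈ ({v,a,x} : Finset V) by simp)
            (by simp; exact ⟨hva.symm, hax, hay⟩)
        have hne3 : ({v,a,y} : Finset V) ≠ ({v,x,y} : Finset V) :=
          ne_of_mem_notMem' (show a ∈ ({v,a,y} : Finset V) by simp)
            (by simp; exact ⟨hva.symm, hax, hay⟩)
        obtain ⟨or2, hor2⟩ : ∃ f : Finset V → Finset (V × V), ∀ H, f H =
            if H = ({v,a,x} : Finset V) then ({(v,a),(a,x),(x,v)} : Finset (V × V))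
            else if H = ({v,a,y} : Finset V) then ({(v,y),(y,a),(a,v)} : Finset (V × V))
            else if H = ({v,x,y} : Finset V) then ({(v,x),(x,y),(y,v)} : Finset (V × V))
            else or' H := ⟨_, fun _ => rfl⟩
        have hor2_vax : or2 ({v,a,x} : Finset V) = {(v,a),(a,x),(x,v)} := by
          rw [hor2, if_pos rfl]
        have hor2_vay : or2 ({v,a,y} : Finset V) = {(v,y),(y,a),(a,v)} := by
          rw [hor2, if_neg hne1.symm, if_pos rfl]
        have hor2_vxy : or2 ({v,x,y} : Finset V) = {(v,x),(x,y),(y,v)} := by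
          rw [hor2, if_neg hne2.symm, if_neg hne3.symm, if_pos rfl]
        have hor2_other : ∀ H : Finset V, v ∉ H → or2 H = or' H := by
          intro H hvH
          rw [hor2, if_neg (fun h => hvH (by rw [h]; simp)),
            if_neg (fun h => hvH (by rw [h]; simp)),
            if_neg (fun h => hvH (by rw [h]; simp))]
        have hd12 : ∀ p ∈ ({(v,a),(a,x),(x,v)} : Finset (V × V)),
            p ∉ ({(v,y),(y,a),(a,v)} : Finset (V × V)) := by
          intro p hp hq
          simp only [Finset.mem_insert, Finset.mem_singleton] at hp hq
          rcases hp with rfl | rfl | rfl <;>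
            simp [Prod.ext_iff, hva, hvx, hvy, hax, hay, hxy, hva.symm, hvx.symm,
              hvy.symm, hax.symm, hay.symm, hxy.symm] at hq
        have hd13 : ∀ p ∈ ({(v,a),(a,x),(x,v)} : Finset (V × V)),
            p ∉ ({(v,x),(x,y),(y,v)} : Finset (V × V)) := by
          intro p hp hq
          simp only [Finset.mem_insert, Finset.mem_singleton] at hp hq
          rcases hp with rfl | rfl | rfl <;>
            simp [Prod.ext_iff, hva, hvx, hvy, hax, hay, hxy, hva.symm, hvx.symm,
              hvy.symm, hax.symm, hay.symm, hxy.symm] at hq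
        have hd23 : ∀ p ∈ ({(v,y),(y,a),(a,v)} : Finset (V × V)),
            p ∉ ({(v,x),(x,y),(y,v)} : Finset (V × V)) := by
          intro p hp hq
          simp only [Finset.mem_insert, Finset.mem_singleton] at hp hq
          rcases hp with rfl | rfl | rfl <;>
            simp [Prod.ext_iff, hva, hvx, hvy, hax, hay, hxy, hva.symm, hvx.symm,
              hvy.symm, hax.symm, hay.symm, hxy.symm] at hq
        have hspec : ∀ Fs : Finset V,
            (Fs = ({v,a,x} : Finset V) ∨ Fs = ({v,a,y} : Finset V) ∨
              Fs = ({v,x,y} : Finset V)) →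
            ∀ p ∈ or2 Fs, ∀ G', G' ∈ faces → v ∉ G' → p ∉ or' G' := by
          intro Fs hFs p hp G' hG'f hvG' hq
          have hG'K : G' ∈ K := (hKmem G').mpr (Or.inr ⟨hG'f, hvG'⟩)
          have hG'ne : ({a,b,c} : Finset V) ≠ G' := fun h => habc (h ▸ hG'f)
          have hmem' := (hcyc' G' hG'K).2.1 p hq
          rcases hFs with rfl | rfl | rfl
          · rw [hor2_vax] at hp
            simp only [Finset.mem_insert, Finset.mem_singleton] at hp
            rcases hp with rfl | rfl | rfl
            · exact hvG' hmem'.1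
            · exact hdisj' _ habcK G' hG'K hG'ne (a,x) (by rw [horabc]; simp) hq
            · exact hvG' hmem'.2.1
          · rw [hor2_vay] at hp
            simp only [Finset.mem_insert, Finset.mem_singleton] at hp
            rcases hp with rfl | rfl | rfl
            · exact hvG' hmem'.1
            · exact hdisj' _ habcK G' hG'K hG'ne (y,a) (by rw [horabc]; simp) hq
            · exact hvG' hmem'.2.1
          · rw [hor2_vxy] at hp
            simp only [Finset.mem_insert, Finset.mem_singleton] at hp
            rcases hp with rfl | rfl | rfl
            · exact hvG' hmem'.1
            · exact hdisj' _ habcK G' hG'K hG'ne (x,y) (by rw [horabc]; simp) hq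
            · exact hvG' hmem'.2.1
        refine ⟨or2, ?_, ?_⟩
        · intro Ff hFf
          by_cases hvF : v ∈ Ff
          · rcases hfv' Ff hFf hvF with rfl | rfl | rfl
            · rw [hor2_vax]; exact cyc_of_triple hva hvx hax
            · rw [hor2_vay]
              have hq : ({v,a,y} : Finset V) = ({v,y,a} : Finset V) := by
                rw [Finset.pair_comm a y]
              rw [hq]
              exact cyc_of_triple hvy hva hay.symm
            · rw [hor2_vxy]; exact cyc_of_triple hvx hvy hxy
          · rw [hor2_other Ff hvF]
            exact hcyc' Ff ((hKmem Ff).mpr (Or.inr ⟨hFf, hvF⟩))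
        · intro Ff hFf G hGf hFG p hp hq
          by_cases hvF : v ∈ Ff <;> by_cases hvG : v ∈ G
          · rcases hfv' Ff hFf hvF with rfl | rfl | rfl <;>
              rcases hfv' G hGf hvG with rfl | rfl | rfl
            · exact hFG rfl
            · rw [hor2_vax] at hp; rw [hor2_vay] at hq; exact hd12 p hp hq
            · rw [hor2_vax] at hp; rw [hor2_vxy] at hq; exact hd13 p hp hq
            · rw [hor2_vay] at hp; rw [hor2_vax] at hq; exact hd12 p hq hp
            · exact hFG rfl
            · rw [hor2_vay] at hp; rw [hor2_vxy] at hq; exact hd23 p hp hq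
            · rw [hor2_vxy] at hp; rw [hor2_vax] at hq; exact hd13 p hq hp
            · rw [hor2_vxy] at hp; rw [hor2_vay] at hq; exact hd23 p hq hp
            · exact hFG rfl
          · rw [hor2_other G hvG] at hq
            exact hspec Ff (hfv' Ff hFf hvF) p hp G hGf hvG hq
          · rw [hor2_other Ff hvF] at hp
            exact hspec G (hfv' G hGf hvG) p hq Ff hFf hvF hp
          · rw [hor2_other Ff hvF] at hp
            rw [hor2_other G hvG] at hq
            exact hdisj' Ff ((hKmem Ff).mpr (Or.inr ⟨hFf, hvF⟩)) G
              ((hKmem G).mpr (Or.inr ⟨hGf, hvG⟩)) hFG p hp hq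
      · -- faces orientable → K orientable
        rintro ⟨or, hcyc, hdisj⟩
        obtain ⟨x, y, hxy, hxbc, horvbc⟩ : ∃ x y : V, x ≠ y ∧ ({x,y} : Finset V) = {b,c} ∧
            or ({v,b,c} : Finset V) = {(v,x),(x,y),(y,v)} := by
          rcases cyc_classify hvb hvc hbc (hcyc _ hvbc) with h | h
          exacts [⟨b, c, hbc, rfl, h⟩, ⟨c, b, hbc.symm, Finset.pair_comm c b, h⟩]
        have hxm : x = b ∨ x = c := by
          have hx' : x ∈ ({b,c} : Finset V) := by rw [← hxbc]; simp
          simpa using hx'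
        have hym : y = b ∨ y = c := by
          have hy' : y ∈ ({b,c} : Finset V) := by rw [← hxbc]; simp
          simpa using hy'
        have hvx : v ≠ x := by rcases hxm with h | h <;> rw [h] <;> assumption
        have hvy : v ≠ y := by rcases hym with h | h <;> rw [h] <;> assumption
        have hax : a ≠ x := by rcases hxm with h | h <;> rw [h] <;> assumption
        have hay : a ≠ y := by rcases hym with h | h <;> rw [h] <;> assumption
        have hvax_f : ({v,a,x} : Finset V) ∈ faces := by
          rcases hxm with h | h <;> rw [h]
          exacts [hvab, hvac]
        have hvay_f : ({v,a,y} : Finset V) ∈ faces := by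
          rcases hym with h | h <;> rw [h]
          exacts [hvab, hvac]
        have habc_xy : ({a,b,c} : Finset V) = ({a,x,y} : Finset V) := by rw [← hxbc]
        have hvax_ne_vbc : ({v,a,x} : Finset V) ≠ ({v,b,c} : Finset V) :=
          ne_of_mem_notMem' (show a ∈ ({v,a,x} : Finset V) by simp)
            (by simp; exact ⟨hva.symm, hab, hac⟩)
        have hvay_ne_vbc : ({v,a,y} : Finset V) ≠ ({v,b,c} : Finset V) :=
          ne_of_mem_notMem' (show a ∈ ({v,a,y} : Finset V) by simp)
            (by simp; exact ⟨hva.symm, hab, hac⟩)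
        have hvax_or : (a,x) ∈ or ({v,a,x} : Finset V) := by
          rcases cyc_classify hva hvx hax (hcyc _ hvax_f) with h | h
          · rw [h]; simp
          · exfalso
            refine hdisj _ hvax_f _ hvbc hvax_ne_vbc (v,x) (by rw [h]; simp) ?_
            rw [horvbc]; simp
        have hvay_or : (y,a) ∈ or ({v,a,y} : Finset V) := by
          rcases cyc_classify hva hvy hay (hcyc _ hvay_f) with h | h
          · exfalso
            refine hdisj _ hvay_f _ hvbc hvay_ne_vbc (y,v) (by rw [h]; simp) ?_
            rw [horvbc]; simp
          · rw [h]; simp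
        obtain ⟨or1, hor1⟩ : ∃ f : Finset V → Finset (V × V), ∀ H, f H =
            if H = ({a,b,c} : Finset V) then ({(a,x),(x,y),(y,a)} : Finset (V × V))
            else or H := ⟨_, fun _ => rfl⟩
        have hor1_abc : or1 ({a,b,c} : Finset V) = {(a,x),(x,y),(y,a)} := by
          rw [hor1, if_pos rfl]
        have hor1_other : ∀ G ∈ faces, or1 G = or G := by
          intro G hGf
          rw [hor1, if_neg (fun h : G = ({a,b,c} : Finset V) => habc (h ▸ hGf))]
        have hcore : ∀ p ∈ ({(a,x),(x,y),(y,a)} : Finset (V × V)),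
            ∀ G ∈ faces, v ∉ G → p ∉ or G := by
          intro p hp G hGf hvG hq
          have hGne_vbc : ({v,b,c} : Finset V) ≠ G :=
            ne_of_mem_notMem' (show v ∈ ({v,b,c} : Finset V) by simp) hvG
          have hGne_vax : ({v,a,x} : Finset V) ≠ G :=
            ne_of_mem_notMem' (show v ∈ ({v,a,x} : Finset V) by simp) hvG
          have hGne_vay : ({v,a,y} : Finset V) ≠ G :=
            ne_of_mem_notMem' (show v ∈ ({v,a,y} : Finset V) by simp) hvG
          simp only [Finset.mem_insert, Finset.mem_singleton] at hp
          rcases hp with rfl | rfl | rfl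
          · exact hdisj _ hvax_f G hGf hGne_vax (a,x) hvax_or hq
          · exact hdisj _ hvbc G hGf hGne_vbc (x,y) (by rw [horvbc]; simp) hq
          · exact hdisj _ hvay_f G hGf hGne_vay (y,a) hvay_or hq
        refine ⟨or1, ?_, ?_⟩
        · intro G hGK
          rcases (hKmem G).mp hGK with rfl | ⟨hGf, _⟩
          · rw [hor1_abc, habc_xy]
            exact cyc_of_triple hax hay hxy
          · rw [hor1_other G hGf]
            exact hcyc G hGf
        · intro Ff hFK G hGK hFG p hp hq
          rcases (hKmem Ff).mp hFK with rfl | ⟨hFf, hvF⟩ <;>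
            rcases (hKmem G).mp hGK with rfl | ⟨hGf, hvG⟩
          · exact hFG rfl
          · rw [hor1_abc] at hp
            rw [hor1_other G hGf] at hq
            exact hcore p hp G hGf hvG hq
          · rw [hor1_other Ff hFf] at hp
            rw [hor1_abc] at hq
            exact hcore p hq Ff hFf hvF hp
          · rw [hor1_other Ff hFf] at hp
            rw [hor1_other G hGf] at hq
            exact hdisj Ff hFf G hGf hFG p hp hq
    -- conclude via irreducibility
    apply hirr {v, a} hEva
    refine ⟨a, v, Finset.pair_comm v a, ?_, ?_, ?_⟩
    · rw [Finset.pair_comm a v]; exact hEva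
    · rw [← hKdef]; exact hKtri
    · rw [← hKdef]; exact ⟨heuler, horient⟩
end

section
/- Let T be an irreducible triangulation of a surface other than the sphere, let w1w2w3 be a nonseparating two-sided 3-cycle, and let T′ be the triangulation obtained by the cut/cap operation along w1w2w3. If xyz is a nonfacial 3-cycle of T sharing no vertex with w1w2w3, then the corresponding 3-cycle x′y′z′ of T′ is nonfacial and all three of its edges are noncontractible in T′. -/
open Finset

open scoped Classical

/-! Combinatorial model of triangulations of closed surfaces.
A triangulation is encoded by its finite set of triangular faces (3-element
vertex sets).  Surface-ness is expressed by: every edge lies in exactly two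
faces, the link of every vertex is connected (hence a single cycle), and the
whole complex is connected. -/

variable {V : Type*} {W : Type*}

section StmtElevenHelpers

variable [DecidableEq V]

lemma triple_ne {x y z : V} (h : ({x, y, z} : Finset V).card = 3) :
    x ≠ y ∧ x ≠ z ∧ y ≠ z := by
  refine ⟨?_, ?_, ?_⟩ <;> rintro rfl
  · rw [Finset.insert_idem] at h
    have := Finset.card_insert_le x ({z} : Finset V)
    simp at this; omega
  · have hsub : ({x, y, x} : Finset V) ⊆ {x, y} := by intro a ha; simp at ha ⊢; tauto
    have h1 := Finset.card_le_card hsub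
    have h2 := Finset.card_insert_le x ({y} : Finset V)
    simp at h2; omega
  · have hsub : ({x, y, y} : Finset V) ⊆ {x, y} := by intro a ha; simp at ha ⊢; tauto
    have h1 := Finset.card_le_card hsub
    have h2 := Finset.card_insert_le x ({y} : Finset V)
    simp at h2; omega

lemma pair_eq_cases {a c p q : V} (h : ({a, c} : Finset V) = {p, q}) (hpq : p ≠ q) :
    (a = p ∧ c = q) ∨ (a = q ∧ c = p) := by
  have ha : a ∈ ({p, q} : Finset V) := h ▸ Finset.mem_insert_self a {c}
  have hc : c ∈ ({p, q} : Finset V) := h ▸ (by simp : c ∈ ({a, c} : Finset V))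
  have hp : p ∈ ({a, c} : Finset V) := h.symm ▸ Finset.mem_insert_self p {q}
  have hq : q ∈ ({a, c} : Finset V) := h.symm ▸ (by simp : q ∈ ({p, q} : Finset V))
  simp only [Finset.mem_insert, Finset.mem_singleton] at ha hc hp hq
  rcases ha with rfl | rfl <;> rcases hc with rfl | rfl <;> tauto

lemma subset_triple_pairs {e : Finset V} {a b c : V} (he : e ⊆ {a, b, c}) (hcard : e.card = 2) :
    e = {a, b} ∨ e = {a, c} ∨ e = {b, c} := by
  obtain ⟨p, q, hpq, rfl⟩ := Finset.card_eq_two.1 hcard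
  have hp := he (Finset.mem_insert_self p {q})
  have hq := he (by simp : q ∈ ({p, q} : Finset V))
  simp only [Finset.mem_insert, Finset.mem_singleton] at hp hq
  rcases hp with rfl | rfl | rfl <;> rcases hq with rfl | rfl | rfl <;>
    first
      | exact absurd rfl hpq
      | exact Or.inl rfl
      | exact Or.inl (Finset.pair_comm _ _)
      | exact Or.inr (Or.inl rfl)
      | exact Or.inr (Or.inl (Finset.pair_comm _ _))
      | exact Or.inr (Or.inr rfl)
      | exact Or.inr (Or.inr (Finset.pair_comm _ _))

lemma rename_inl_self {w : Fin 3 → V} (s : Bool) {v : V}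
    (h0 : v ≠ w 0) (h1 : v ≠ w 1) (h2 : v ≠ w 2) :
    renameTwoSided w s v = Sum.inl v := by
  unfold renameTwoSided
  rw [if_neg h0, if_neg h1, if_neg h2]

lemma rename_underlying {w : Fin 3 → V} {s s' : Bool} {v v' : V}
    (h : renameTwoSided w s v = renameTwoSided w s' v') : v = v' := by
  unfold renameTwoSided at h
  cases s <;> cases s' <;> split_ifs at h <;> simp_all

lemma rename_inl_eq {w : Fin 3 → V} {s : Bool} {v a : V}
    (h : renameTwoSided w s v = Sum.inl a) : v = a := by
  unfold renameTwoSided at h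
  cases s <;> split_ifs at h <;> simp_all

lemma inl_mem_rn {w : Fin 3 → V} {s : Bool} {F : Finset V} {a : V}
    (h0 : a ≠ w 0) (h1 : a ≠ w 1) (h2 : a ≠ w 2) :
    Sum.inl a ∈ F.image (renameTwoSided w s) ↔ a ∈ F := by
  simp only [Finset.mem_image]
  constructor
  · rintro ⟨v, hv, he⟩
    exact (rename_inl_eq he) ▸ hv
  · intro haF
    exact ⟨a, haF, rename_inl_self s h0 h1 h2⟩

lemma third_vertex {F : Finset V} (hF : F.card = 3) {a b : V} (hab : a ≠ b)
    (hsub : ({a, b} : Finset V) ⊆ F) : ∃ t, t ≠ a ∧ t ≠ b ∧ F = {a, b, t} := by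
  have hpair : ({a, b} : Finset V).card = 2 := Finset.card_pair hab
  have h1 : (F \ {a, b}).card = 1 := by
    rw [Finset.card_sdiff_of_subset hsub, hF, hpair]
  obtain ⟨t, ht⟩ := Finset.card_eq_one.1 h1
  have htm : t ∈ F \ ({a, b} : Finset V) := ht ▸ Finset.mem_singleton_self t
  rw [Finset.mem_sdiff, Finset.mem_insert, Finset.mem_singleton] at htm
  refine ⟨t, fun h => htm.2 (Or.inl h), fun h => htm.2 (Or.inr h), ?_⟩
  have : ({a, b} : Finset V) ∪ (F \ {a, b}) = F := Finset.union_sdiff_of_subset hsub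
  rw [ht] at this
  rw [← this]
  ext u
  simp only [Finset.mem_union, Finset.mem_insert, Finset.mem_singleton]
  tauto

lemma eq_of_two {α : Type*} [DecidableEq α] {s : Finset α} (hcard : s.card = 2) {A B : α}
    (hA : A ∈ s) (hB : B ∈ s) (hAB : A ≠ B) : ∀ C ∈ s, C = A ∨ C = B := by
  have hsub : ({A, B} : Finset α) ⊆ s := by
    intro c hc
    rcases Finset.mem_insert.1 hc with rfl | hc
    · exact hA
    · rw [Finset.mem_singleton] at hc; exact hc ▸ hB
  have heq : ({A, B} : Finset α) = s :=
    Finset.eq_of_subset_of_card_le hsub (by rw [hcard, Finset.card_pair hAB])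
  intro C hC
  have : C ∈ ({A, B} : Finset α) := heq.symm ▸ hC
  simpa using this

lemma no_face_of_triple {faces : Finset (Finset V)} (hT : IsTriangulation faces) {x y z : V}
    (hc3 : ({x, y, z} : Finset V).card = 3) (hnf : ({x, y, z} : Finset V) ∉ faces)
    {F : Finset V} (hF : F ∈ faces) (hx : x ∈ F) (hy : y ∈ F) (hz : z ∈ F) : False := by
  have hsub : ({x, y, z} : Finset V) ⊆ F := by
    intro a ha
    simp only [Finset.mem_insert, Finset.mem_singleton] at ha
    rcases ha with rfl | rfl | rfl <;> assumption
  have heq : ({x, y, z} : Finset V) = F :=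
    Finset.eq_of_subset_of_card_le hsub (by rw [hT.card_three F hF, hc3])
  exact hnf (heq ▸ hF)

lemma mem_cutCap {faces : Finset (Finset V)} {w : Fin 3 → V} {side : Finset V → Bool}
    {S : Finset (V ⊕ Fin 3)} :
    S ∈ cutCapTwoSided faces w side ↔
      (∃ F ∈ faces, F.image (renameTwoSided w (side F)) = S) ∨
      S = ({Sum.inl (w 0), Sum.inl (w 1), Sum.inl (w 2)} : Finset (V ⊕ Fin 3)) ∨
      S = ({Sum.inr 0, Sum.inr 1, Sum.inr 2} : Finset (V ⊕ Fin 3)) := by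
  unfold cutCapTwoSided
  simp only [Finset.mem_union, Finset.mem_image, Finset.mem_insert, Finset.mem_singleton]

/-- The map used by `contract`. -/
def cmap (a c : V) : V → V := fun v => if v = c then a else v

lemma cmap_of_ne {a c v : V} (h : v ≠ c) : cmap a c v = v := if_neg h

lemma cmap_self (a c : V) : cmap a c c = a := if_pos rfl

lemma mem_contract {faces : Finset (Finset V)} {a c : V} {S : Finset V} :
    S ∈ contract faces a c ↔
      ∃ S' ∈ faces, ¬(a ∈ S' ∧ c ∈ S') ∧ Finset.image (cmap a c) S' = S := by
  unfold contract cmap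
  simp only [Finset.mem_image, Finset.mem_filter]
  constructor
  · rintro ⟨S', ⟨hS', hfilt⟩, himg⟩; exact ⟨S', hS', hfilt, himg⟩
  · rintro ⟨S', hS', hfilt, himg⟩; exact ⟨S', ⟨hS', hfilt⟩, himg⟩

lemma rn_triple {w : Fin 3 → V} (sb : Bool) {b c tA : V}
    (hb : ∀ k : Fin 3, b ≠ w k) (hc : ∀ k : Fin 3, c ≠ w k) :
    ({b, c, tA} : Finset V).image (renameTwoSided w sb) =
      {Sum.inl b, Sum.inl c, renameTwoSided w sb tA} := by
  rw [Finset.image_insert, Finset.image_insert, Finset.image_singleton,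
    rename_inl_self _ (hb 0) (hb 1) (hb 2), rename_inl_self _ (hc 0) (hc 1) (hc 2)]

set_option maxHeartbeats 8000000 in
lemma key_noncontract {faces : Finset (Finset V)} (hT : IsTriangulation faces)
    (w : Fin 3 → V) (side : Finset V → Bool) {x y z : V}
    (hxyz : IsNonfacialTriCycle faces {x, y, z})
    (hdisj : ({x, y, z} : Finset V) ∩ ({w 0, w 1, w 2} : Finset V) = ∅) :
    ¬ Contractible (cutCapTwoSided faces w side) (Sum.inl x) (Sum.inl y) := by
  obtain ⟨⟨hc3, hedges⟩, hnf⟩ := hxyz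
  obtain ⟨hxy, hxz, hyz⟩ := triple_ne hc3
  have hnw : ∀ a ∈ ({x, y, z} : Finset V), ∀ k : Fin 3, a ≠ w k := by
    intro a ha k hak
    have hmem : a ∈ ({x, y, z} : Finset V) ∩ ({w 0, w 1, w 2} : Finset V) := by
      rw [Finset.mem_inter]
      exact ⟨ha, by fin_cases k <;> rw [hak] <;> simp⟩
    rw [hdisj] at hmem
    exact Finset.notMem_empty a hmem
  have hxw : ∀ k : Fin 3, x ≠ w k := hnw x (by simp)
  have hyw : ∀ k : Fin 3, y ≠ w k := hnw y (by simp)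
  have hzw : ∀ k : Fin 3, z ≠ w k := hnw z (by simp)
  have edge_face : ∀ a b : V, a ≠ b → ({a, b} : Finset V) ⊆ {x, y, z} →
      ∃ F ∈ faces, ({a, b} : Finset V) ⊆ F := by
    intro a b hab hsub
    have h1 : ({a, b} : Finset V) ∈ ({x, y, z} : Finset V).powersetCard 2 :=
      Finset.mem_powersetCard.2 ⟨hsub, Finset.card_pair hab⟩
    have h2 := hedges _ h1
    unfold edgeSet at h2
    exact (Finset.mem_filter.1 h2).2
  -- the two faces on the edge xz
  obtain ⟨F0, hF0f, hF0sub⟩ := edge_face x z hxz (by intro a ha; simp at ha ⊢; tauto)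
  have hAcard : (faces.filter fun F => ({x, z} : Finset V) ⊆ F).card = 2 :=
    hT.edge_two_faces _ (Finset.card_pair hxz) ⟨F0, hF0f, hF0sub⟩
  obtain ⟨A1, A2, hA12, hAeq⟩ := Finset.card_eq_two.1 hAcard
  have hA1m : A1 ∈ faces ∧ ({x, z} : Finset V) ⊆ A1 := by
    have : A1 ∈ faces.filter fun F => ({x, z} : Finset V) ⊆ F := by rw [hAeq]; simp
    exact Finset.mem_filter.1 this
  have hA2m : A2 ∈ faces ∧ ({x, z} : Finset V) ⊆ A2 := by
    have : A2 ∈ faces.filter fun F => ({x, z} : Finset V) ⊆ F := by rw [hAeq]; simp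
    exact Finset.mem_filter.1 this
  obtain ⟨t1, ht1x, ht1z, hA1eq⟩ := third_vertex (hT.card_three A1 hA1m.1) hxz hA1m.2
  obtain ⟨t2, ht2x, ht2z, hA2eq⟩ := third_vertex (hT.card_three A2 hA2m.1) hxz hA2m.2
  have ht1y : t1 ≠ y := by
    intro h
    exact no_face_of_triple hT hc3 hnf hA1m.1 (hA1m.2 (by simp)) (h ▸ (by rw [hA1eq]; simp))
      (hA1m.2 (by simp))
  have ht2y : t2 ≠ y := by
    intro h
    exact no_face_of_triple hT hc3 hnf hA2m.1 (hA2m.2 (by simp)) (h ▸ (by rw [hA2eq]; simp))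
      (hA2m.2 (by simp))
  have ht12 : t1 ≠ t2 := by
    intro h
    exact hA12 (by rw [hA1eq, hA2eq, h])
  -- one face on the edge yz
  obtain ⟨B1, hB1f, hB1sub⟩ := edge_face y z hyz (by intro a ha; simp at ha ⊢; tauto)
  obtain ⟨s, hsy, hsz, hB1eq⟩ := third_vertex (hT.card_three B1 hB1f) hyz hB1sub
  have hsx : s ≠ x := by
    intro h
    exact no_face_of_triple hT hc3 hnf hB1f (h ▸ (by rw [hB1eq]; simp)) (hB1sub (by simp))
      (hB1sub (by simp))
  -- now suppose the edge x'y' is contractible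
  intro hcon
  have hKtri : IsTriangulation
      (contract (cutCapTwoSided faces w side) (Sum.inl x) (Sum.inl y)) := hcon.2.1
  -- abbreviations
  set T' := cutCapTwoSided faces w side with hT'
  set φ := cmap (Sum.inl x : V ⊕ Fin 3) (Sum.inl y) with hφ
  set u1 := renameTwoSided w (side A1) t1 with hu1
  set u2 := renameTwoSided w (side A2) t2 with hu2
  set v1 := renameTwoSided w (side B1) s with hv1
  -- image computations
  have hrnA1 : A1.image (renameTwoSided w (side A1)) = {Sum.inl x, Sum.inl z, u1} := by
    have h := rn_triple (w := w) (side A1) (tA := t1) hxw hzw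
    rw [← hA1eq] at h
    rw [h, hu1]
  have hrnA2 : A2.image (renameTwoSided w (side A2)) = {Sum.inl x, Sum.inl z, u2} := by
    have h := rn_triple (w := w) (side A2) (tA := t2) hxw hzw
    rw [← hA2eq] at h
    rw [h, hu2]
  have hrnB1 : B1.image (renameTwoSided w (side B1)) = {Sum.inl y, Sum.inl z, v1} := by
    have h := rn_triple (w := w) (side B1) (tA := s) hyw hzw
    rw [← hB1eq] at h
    rw [h, hv1]
  have hu1y : u1 ≠ Sum.inl y := fun h => ht1y (rename_inl_eq h)
  have hu1x : u1 ≠ Sum.inl x := fun h => ht1x (rename_inl_eq h)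
  have hu1z : u1 ≠ Sum.inl z := fun h => ht1z (rename_inl_eq h)
  have hu2y : u2 ≠ Sum.inl y := fun h => ht2y (rename_inl_eq h)
  have hu2x : u2 ≠ Sum.inl x := fun h => ht2x (rename_inl_eq h)
  have hu2z : u2 ≠ Sum.inl z := fun h => ht2z (rename_inl_eq h)
  have hv1y : v1 ≠ Sum.inl y := fun h => hsy (rename_inl_eq h)
  have hv1x : v1 ≠ Sum.inl x := fun h => hsx (rename_inl_eq h)
  have hv1z : v1 ≠ Sum.inl z := fun h => hsz (rename_inl_eq h)
  have hu12 : u1 ≠ u2 := fun h => ht12 (rename_underlying h)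
  have hφimg : ∀ u : V ⊕ Fin 3, u ≠ Sum.inl y →
      Finset.image φ {Sum.inl x, Sum.inl z, u} = {Sum.inl x, Sum.inl z, u} := by
    intro u hu
    rw [Finset.image_insert, Finset.image_insert, Finset.image_singleton, hφ,
      cmap_of_ne (by simp [hxy]), cmap_of_ne (by simp [hyz.symm]), cmap_of_ne hu]
  have hφimgY : ∀ u : V ⊕ Fin 3, u ≠ Sum.inl y →
      Finset.image φ {Sum.inl y, Sum.inl z, u} = {Sum.inl x, Sum.inl z, u} := by
    intro u hu
    rw [Finset.image_insert, Finset.image_insert, Finset.image_singleton, hφ,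
      cmap_self, cmap_of_ne (by simp [hyz.symm]), cmap_of_ne hu]
  -- membership of the candidate faces in the contraction
  have hmemKA : ∀ (A : Finset V) (u : V ⊕ Fin 3), A ∈ faces → y ∉ A →
      A.image (renameTwoSided w (side A)) = {Sum.inl x, Sum.inl z, u} → u ≠ Sum.inl y →
      ({Sum.inl x, Sum.inl z, u} : Finset (V ⊕ Fin 3)) ∈ contract T' (Sum.inl x) (Sum.inl y) := by
    intro A u hAf hyA hrn hu
    rw [mem_contract]
    refine ⟨A.image (renameTwoSided w (side A)), ?_, ?_, ?_⟩
    · rw [hT']; exact mem_cutCap.2 (Or.inl ⟨A, hAf, rfl⟩)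
    · rintro ⟨-, hy'⟩
      exact hyA ((inl_mem_rn (hyw 0) (hyw 1) (hyw 2)).1 hy')
    · rw [hrn]; exact hφimg u hu
  have hyA1 : y ∉ A1 := by
    intro h
    exact no_face_of_triple hT hc3 hnf hA1m.1 (hA1m.2 (by simp)) h (hA1m.2 (by simp))
  have hyA2 : y ∉ A2 := by
    intro h
    exact no_face_of_triple hT hc3 hnf hA2m.1 (hA2m.2 (by simp)) h (hA2m.2 (by simp))
  have hxB1 : x ∉ B1 := by
    intro h
    exact no_face_of_triple hT hc3 hnf hB1f h (hB1sub (by simp)) (hB1sub (by simp))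
  have hP1K := hmemKA A1 u1 hA1m.1 hyA1 hrnA1 hu1y
  have hP2K := hmemKA A2 u2 hA2m.1 hyA2 hrnA2 hu2y
  have hQ1K : ({Sum.inl x, Sum.inl z, v1} : Finset (V ⊕ Fin 3)) ∈
      contract T' (Sum.inl x) (Sum.inl y) := by
    rw [mem_contract]
    refine ⟨B1.image (renameTwoSided w (side B1)), ?_, ?_, ?_⟩
    · rw [hT']; exact mem_cutCap.2 (Or.inl ⟨B1, hB1f, rfl⟩)
    · rintro ⟨hx', -⟩
      exact hxB1 ((inl_mem_rn (hxw 0) (hxw 1) (hxw 2)).1 hx')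
    · rw [hrnB1]; exact hφimgY v1 hv1y
  -- the filter at the edge {x', z'} has exactly two elements
  have hS2card : ((contract T' (Sum.inl x) (Sum.inl y)).filter
      fun S => ({Sum.inl x, Sum.inl z} : Finset (V ⊕ Fin 3)) ⊆ S).card = 2 :=
    hKtri.edge_two_faces _ (Finset.card_pair (by simp [hxz]))
      ⟨_, hP1K, by intro a ha; simp at ha ⊢; tauto⟩
  have hsub2 : ∀ u : V ⊕ Fin 3, ({Sum.inl x, Sum.inl z} : Finset (V ⊕ Fin 3)) ⊆
      {Sum.inl x, Sum.inl z, u} := by intro u a ha; simp at ha ⊢; tauto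
  have hP1m : ({Sum.inl x, Sum.inl z, u1} : Finset (V ⊕ Fin 3)) ∈
      (contract T' (Sum.inl x) (Sum.inl y)).filter
        (fun S => ({Sum.inl x, Sum.inl z} : Finset (V ⊕ Fin 3)) ⊆ S) :=
    Finset.mem_filter.2 ⟨hP1K, hsub2 u1⟩
  have hP2m : ({Sum.inl x, Sum.inl z, u2} : Finset (V ⊕ Fin 3)) ∈
      (contract T' (Sum.inl x) (Sum.inl y)).filter
        (fun S => ({Sum.inl x, Sum.inl z} : Finset (V ⊕ Fin 3)) ⊆ S) :=
    Finset.mem_filter.2 ⟨hP2K, hsub2 u2⟩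
  have hQ1m : ({Sum.inl x, Sum.inl z, v1} : Finset (V ⊕ Fin 3)) ∈
      (contract T' (Sum.inl x) (Sum.inl y)).filter
        (fun S => ({Sum.inl x, Sum.inl z} : Finset (V ⊕ Fin 3)) ⊆ S) :=
    Finset.mem_filter.2 ⟨hQ1K, hsub2 v1⟩
  have hP12 : ({Sum.inl x, Sum.inl z, u1} : Finset (V ⊕ Fin 3)) ≠ {Sum.inl x, Sum.inl z, u2} := by
    intro h
    have : u1 ∈ ({Sum.inl x, Sum.inl z, u2} : Finset (V ⊕ Fin 3)) := h ▸ (by simp)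
    simp only [Finset.mem_insert, Finset.mem_singleton] at this
    rcases this with h' | h' | h'
    exacts [hu1x h', hu1z h', hu12 h']
  have hQcase := eq_of_two hS2card hP1m hP2m hP12 _ hQ1m
  -- in either case we obtain a face A = {x, z, t} with rename (side B1) s = rename (side A) t
  have final : ∀ (A : Finset V) (tA : V), A ∈ faces → tA ≠ x → tA ≠ z → tA ≠ y →
      A = {x, z, tA} → renameTwoSided w (side B1) s = renameTwoSided w (side A) tA → False := by
    intro A tA hAf htx htz hty hAe hren
    obtain rfl : s = tA := rename_underlying hren
    set u := renameTwoSided w (side A) s with hu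
    have hren' : renameTwoSided w (side B1) s = u := hren
    have huy : u ≠ Sum.inl y := fun h => hsy (rename_inl_eq h)
    have hux : u ≠ Sum.inl x := fun h => hsx (rename_inl_eq h)
    have huz : u ≠ Sum.inl z := fun h => hsz (rename_inl_eq h)
    have hyA : y ∉ A := by
      intro h; rw [hAe] at h; simp at h
      rcases h with h | h | h
      exacts [hxy h.symm, hyz h, hty h.symm]
    have hrnA : A.image (renameTwoSided w (side A)) = {Sum.inl x, Sum.inl z, u} := by
      have h := rn_triple (w := w) (side A) (tA := s) hxw hzw
      rw [← hAe] at h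
      rw [h, hu]
    have hPK := hmemKA A u hAf hyA hrnA huy
    -- the filter at the edge {z', u} must have two elements
    have hS3card : ((contract T' (Sum.inl x) (Sum.inl y)).filter
        fun S => ({Sum.inl z, u} : Finset (V ⊕ Fin 3)) ⊆ S).card = 2 :=
      hKtri.edge_two_faces _ (Finset.card_pair (Ne.symm huz))
        ⟨_, hPK, by intro a ha; simp at ha ⊢; tauto⟩
    -- but every element of that filter equals {x', z', u}
    have hall : ∀ S ∈ (contract T' (Sum.inl x) (Sum.inl y)).filter
        (fun S => ({Sum.inl z, u} : Finset (V ⊕ Fin 3)) ⊆ S),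
        S = ({Sum.inl x, Sum.inl z, u} : Finset (V ⊕ Fin 3)) := by
      intro S hS
      obtain ⟨hSK, hSsub⟩ := Finset.mem_filter.1 hS
      obtain ⟨S', hS'T, hS'filt, hS'img⟩ := mem_contract.1 hSK
      have hzS' : Sum.inl z ∈ S' := by
        have h1 : Sum.inl z ∈ Finset.image φ S' := by
          rw [hS'img]; exact hSsub (by simp)
        obtain ⟨v, hv, hveq⟩ := Finset.mem_image.1 h1
        by_cases hvy : v = Sum.inl y
        · rw [hφ, cmap, hvy, if_pos rfl] at hveq
          exact absurd (Sum.inl.inj hveq) hxz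
        · rw [hφ, cmap_of_ne hvy] at hveq
          exact hveq ▸ hv
      have huS' : u ∈ S' := by
        have h1 : u ∈ Finset.image φ S' := by
          rw [hS'img]; exact hSsub (by simp)
        obtain ⟨v, hv, hveq⟩ := Finset.mem_image.1 h1
        by_cases hvy : v = Sum.inl y
        · rw [hφ, cmap, hvy, if_pos rfl] at hveq
          exact absurd hveq.symm hux
        · rw [hφ, cmap_of_ne hvy] at hveq
          exact hveq ▸ hv
      rw [hT'] at hS'T
      rcases mem_cutCap.1 hS'T with ⟨F, hFf, hFeq⟩ | hcap1 | hcap2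
      · rw [← hFeq] at hzS' huS'
        have hzF : z ∈ F := (inl_mem_rn (hzw 0) (hzw 1) (hzw 2)).1 hzS'
        have hsF : s ∈ F := by
          obtain ⟨v, hvF, hveq⟩ := Finset.mem_image.1 huS'
          have hvs : renameTwoSided w (side F) v = renameTwoSided w (side A) s := by
            rw [hveq, hu]
          have : v = s := rename_underlying hvs
          exact this ▸ hvF
        -- F is one of the two faces on the edge {z, s}
        have hcardzs : (faces.filter fun G => ({z, s} : Finset V) ⊆ G).card = 2 :=
          hT.edge_two_faces _ (Finset.card_pair (Ne.symm hsz))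
            ⟨A, hAf, by rw [hAe]; intro a ha; simp at ha ⊢; tauto⟩
        have hAm' : A ∈ faces.filter fun G => ({z, s} : Finset V) ⊆ G :=
          Finset.mem_filter.2 ⟨hAf, by rw [hAe]; intro a ha; simp at ha ⊢; tauto⟩
        have hBm' : B1 ∈ faces.filter fun G => ({z, s} : Finset V) ⊆ G :=
          Finset.mem_filter.2 ⟨hB1f, by rw [hB1eq]; intro a ha; simp at ha ⊢; tauto⟩
        have hAB : A ≠ B1 := by
          intro h
          exact hxB1 (h ▸ (by rw [hAe]; simp : x ∈ A))
        have hFm' : F ∈ faces.filter fun G => ({z, s} : Finset V) ⊆ G :=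
          Finset.mem_filter.2 ⟨hFf, by intro a ha; simp at ha; rcases ha with rfl | rfl <;>
            assumption⟩
        rcases eq_of_two hcardzs hAm' hBm' hAB F hFm' with rfl | rfl
        · rw [← hS'img, ← hFeq, hrnA, hφimg u huy]
        · have hrnB := rn_triple (w := w) (side F) (tA := s) hyw hzw
          rw [← hB1eq] at hrnB
          rw [← hS'img, ← hFeq, hrnB, hren', hφimgY u huy]
      · rw [hcap1] at hzS'
        simp only [Finset.mem_insert, Finset.mem_singleton, Sum.inl.injEq] at hzS'
        rcases hzS' with h | h | h
        exacts [absurd h (hzw 0), absurd h (hzw 1), absurd h (hzw 2)]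
      · rw [hcap2] at hzS'
        simp at hzS'
    have hle : ((contract T' (Sum.inl x) (Sum.inl y)).filter
        fun S => ({Sum.inl z, u} : Finset (V ⊕ Fin 3)) ⊆ S).card ≤ 1 :=
      Finset.card_le_one.2 (fun a ha b hb => by rw [hall a ha, hall b hb])
    omega
  rcases hQcase with hq | hq
  · have hveq : v1 = u1 := by
      have : v1 ∈ ({Sum.inl x, Sum.inl z, u1} : Finset (V ⊕ Fin 3)) := hq ▸ (by simp)
      simp only [Finset.mem_insert, Finset.mem_singleton] at this
      rcases this with h | h | h
      exacts [absurd h hv1x, absurd h hv1z, h]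
    exact final A1 t1 hA1m.1 ht1x ht1z ht1y hA1eq (by rw [← hu1, ← hv1, hveq])
  · have hveq : v1 = u2 := by
      have : v1 ∈ ({Sum.inl x, Sum.inl z, u2} : Finset (V ⊕ Fin 3)) := hq ▸ (by simp)
      simp only [Finset.mem_insert, Finset.mem_singleton] at this
      rcases this with h | h | h
      exacts [absurd h hv1x, absurd h hv1z, h]
    exact final A2 t2 hA2m.1 ht2x ht2z ht2y hA2eq (by rw [← hu2, ← hv1, hveq])

end StmtElevenHelpers

/-- Case 0 of the paper: a nonfacial 3-cycle of an irreducible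
triangulation disjoint from the two-sided cutting 3-cycle survives the cut/cap
operation as a nonfacial 3-cycle, and all three of its edges are noncontractible in
the resulting triangulation. -/
theorem stmt11 [DecidableEq V] (faces : Finset (Finset V)) (h : IrreducibleTri faces)
    (hsphere : eulerChar faces ≠ 2) (w : Fin 3 → V) (hw : Function.Injective w)
    (hcyc : IsTriCycle faces {w 0, w 1, w 2})
    (hns : Nonseparating faces {w 0, w 1, w 2})
    (hts : ¬ OneSided faces {w 0, w 1, w 2})
    (side : Finset V → Bool) (hside : CoherentSide faces {w 0, w 1, w 2} side)
    (x y z : V) (hxyz : IsNonfacialTriCycle faces {x, y, z})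
    (hdisj : ({x, y, z} : Finset V) ∩ ({w 0, w 1, w 2} : Finset V) = ∅) :
    IsNonfacialTriCycle (cutCapTwoSided faces w side)
      ({Sum.inl x, Sum.inl y, Sum.inl z} : Finset (V ⊕ Fin 3)) ∧
    ∀ e ∈ (({Sum.inl x, Sum.inl y, Sum.inl z} : Finset (V ⊕ Fin 3)).powersetCard 2),
      ¬ ContractibleEdge (cutCapTwoSided faces w side) e := by
  obtain ⟨hT, -⟩ := h
  have hc3 := hxyz.1.1
  have hedges := hxyz.1.2
  have hnf := hxyz.2
  obtain ⟨hxy, hxz, hyz⟩ := triple_ne hc3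
  have hnw : ∀ a ∈ ({x, y, z} : Finset V), ∀ k : Fin 3, a ≠ w k := by
    intro a ha k hak
    have hmem : a ∈ ({x, y, z} : Finset V) ∩ ({w 0, w 1, w 2} : Finset V) := by
      rw [Finset.mem_inter]
      exact ⟨ha, by fin_cases k <;> rw [hak] <;> simp⟩
    rw [hdisj] at hmem
    exact Finset.notMem_empty a hmem
  have hxw : ∀ k : Fin 3, x ≠ w k := hnw x (by simp)
  have hyw : ∀ k : Fin 3, y ≠ w k := hnw y (by simp)
  have hzw : ∀ k : Fin 3, z ≠ w k := hnw z (by simp)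
  have edge_face : ∀ a b : V, a ≠ b → ({a, b} : Finset V) ⊆ {x, y, z} →
      ∃ F ∈ faces, ({a, b} : Finset V) ⊆ F := by
    intro a b hab hsub
    have h1 : ({a, b} : Finset V) ∈ ({x, y, z} : Finset V).powersetCard 2 :=
      Finset.mem_powersetCard.2 ⟨hsub, Finset.card_pair hab⟩
    have h2 := hedges _ h1
    unfold edgeSet at h2
    exact (Finset.mem_filter.1 h2).2
  have hedge' : ∀ a b : V, a ≠ b → (∀ k : Fin 3, a ≠ w k) → (∀ k : Fin 3, b ≠ w k) →
      (∃ F ∈ faces, ({a, b} : Finset V) ⊆ F) →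
      ({Sum.inl a, Sum.inl b} : Finset (V ⊕ Fin 3)) ∈
        edgeSet (cutCapTwoSided faces w side) := by
    rintro a b hab haw hbw ⟨F, hF, hsub⟩
    have hmemF : F.image (renameTwoSided w (side F)) ∈ cutCapTwoSided faces w side :=
      mem_cutCap.2 (Or.inl ⟨F, hF, rfl⟩)
    have hasub : ({Sum.inl a, Sum.inl b} : Finset (V ⊕ Fin 3)) ⊆
        F.image (renameTwoSided w (side F)) := by
      intro c hc
      simp only [Finset.mem_insert, Finset.mem_singleton] at hc
      rcases hc with rfl | rfl
      · exact (inl_mem_rn (haw 0) (haw 1) (haw 2)).2 (hsub (by simp))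
      · exact (inl_mem_rn (hbw 0) (hbw 1) (hbw 2)).2 (hsub (by simp))
    unfold edgeSet
    rw [Finset.mem_filter, Finset.mem_powersetCard]
    refine ⟨⟨?_, Finset.card_pair (by simp [hab])⟩, _, hmemF, hasub⟩
    intro c hc
    unfold vertexSet
    rw [Finset.mem_biUnion]
    exact ⟨_, hmemF, hasub hc⟩
  constructor
  · refine ⟨⟨?_, ?_⟩, ?_⟩
    · rw [Finset.card_insert_of_notMem (by simp [hxy, hxz]),
        Finset.card_insert_of_notMem (by simp [hyz]), Finset.card_singleton]
    · intro e he
      rw [Finset.mem_powersetCard] at he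
      rcases subset_triple_pairs he.1 he.2 with rfl | rfl | rfl
      · exact hedge' x y hxy hxw hyw (edge_face x y hxy (by intro a ha; simp at ha ⊢; tauto))
      · exact hedge' x z hxz hxw hzw (edge_face x z hxz (by intro a ha; simp at ha ⊢; tauto))
      · exact hedge' y z hyz hyw hzw (edge_face y z hyz (by intro a ha; simp at ha ⊢; tauto))
    · intro hmem
      rcases mem_cutCap.1 hmem with ⟨F, hF, hFeq⟩ | hcap | hcap
      · have hx : x ∈ F := (inl_mem_rn (hxw 0) (hxw 1) (hxw 2)).1 (by rw [hFeq]; simp)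
        have hy : y ∈ F := (inl_mem_rn (hyw 0) (hyw 1) (hyw 2)).1 (by rw [hFeq]; simp)
        have hz : z ∈ F := (inl_mem_rn (hzw 0) (hzw 1) (hzw 2)).1 (by rw [hFeq]; simp)
        exact no_face_of_triple hT hc3 hnf hF hx hy hz
      · have hx : (Sum.inl x : V ⊕ Fin 3) ∈
            ({Sum.inl (w 0), Sum.inl (w 1), Sum.inl (w 2)} : Finset (V ⊕ Fin 3)) := by
          rw [← hcap]; simp
        simp only [Finset.mem_insert, Finset.mem_singleton, Sum.inl.injEq] at hx
        rcases hx with h' | h' | h'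
        exacts [absurd h' (hxw 0), absurd h' (hxw 1), absurd h' (hxw 2)]
      · have hx : (Sum.inl x : V ⊕ Fin 3) ∈
            ({Sum.inr 0, Sum.inr 1, Sum.inr 2} : Finset (V ⊕ Fin 3)) := by
          rw [← hcap]; simp
        simp at hx
  · intro e he hce
    rw [Finset.mem_powersetCard] at he
    obtain ⟨a, c, heq, hcon⟩ := hce
    have e1 : ({y, x, z} : Finset V) = {x, y, z} := by ext u; simp; tauto
    have e2 : ({x, z, y} : Finset V) = {x, y, z} := by ext u; simp; tauto
    have e3 : ({z, x, y} : Finset V) = {x, y, z} := by ext u; simp; tauto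
    have e4 : ({y, z, x} : Finset V) = {x, y, z} := by ext u; simp; tauto
    have e5 : ({z, y, x} : Finset V) = {x, y, z} := by ext u; simp; tauto
    rcases subset_triple_pairs he.1 he.2 with rfl | rfl | rfl
    · rcases pair_eq_cases heq.symm (show (Sum.inl x : V ⊕ Fin 3) ≠ Sum.inl y by
        simp [hxy]) with ⟨rfl, rfl⟩ | ⟨rfl, rfl⟩
      · exact key_noncontract hT w side hxyz hdisj hcon
      · exact key_noncontract hT w side (x := y) (y := x) (z := z)
          (by rw [e1]; exact hxyz) (by rw [e1]; exact hdisj) hcon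
    · rcases pair_eq_cases heq.symm (show (Sum.inl x : V ⊕ Fin 3) ≠ Sum.inl z by
        simp [hxz]) with ⟨rfl, rfl⟩ | ⟨rfl, rfl⟩
      · exact key_noncontract hT w side (x := x) (y := z) (z := y)
          (by rw [e2]; exact hxyz) (by rw [e2]; exact hdisj) hcon
      · exact key_noncontract hT w side (x := z) (y := x) (z := y)
          (by rw [e3]; exact hxyz) (by rw [e3]; exact hdisj) hcon
    · rcases pair_eq_cases heq.symm (show (Sum.inl y : V ⊕ Fin 3) ≠ Sum.inl z by
        simp [hyz]) with ⟨rfl, rfl⟩ | ⟨rfl, rfl⟩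
      · exact key_noncontract hT w side (x := y) (y := z) (z := x)
          (by rw [e4]; exact hxyz) (by rw [e4]; exact hdisj) hcon
      · exact key_noncontract hT w side (x := z) (y := y) (z := x)
          (by rw [e5]; exact hxyz) (by rw [e5]; exact hdisj) hcon
end
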